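/- arXiv:2511.14038 — 8 statements merged into one kernel-verified Lean document; each statement's English description precedes it below -/
import Mathlib

section
/- Let n ≥ 1 and 1 ≤ m < 2^{n/2} be integers. Let R = 𝒳 × 𝒴 ⊆ {0,1}^{nm} × {0,1}^{nm} be a rectangle of size |𝒳|·|𝒴| ≥ 2^{2nm−m+2}, and let s ∈ {0,1}^n be any string. Then there exists a subrectangle R' = 𝒳' × 𝒴' of R (with 𝒳' ⊆ 𝒳 and 𝒴' ⊆ 𝒴) of size at least 2^{−2n−2}·|𝒳|·|𝒴| such that for every (X,Y) ∈ R', s is not a solution to XOR-Missing-String on (X,Y); that is, s = x_i ⊕ y_j for some i,j ∈ [m]. -/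
/-!
Call a string heavy for `𝒳` if it occurs as an entry of at least a `2^{-(n+1)}` fraction of the
members of `𝒳`, and let `H` be the set of heavy strings. The members of `𝒳` having a light entry
cover at most half of `𝒳`, and the others lie in `H^m`, so `|𝒳| ≤ 2 |H|^m`. Since
`|𝒴| ≤ 2^{nm}`, the size bound gives `|𝒳| ≥ 4 · 2^{(n-1)m}`, hence more than `2^{n-1}` heavy
strings for `𝒳`, and likewise for `𝒴`. By pigeonhole some `a` heavy for `𝒳` and `b` heavy for `𝒴`
satisfy `a ⊕ b = s`, and the rectangle of those `X ∈ 𝒳` containing `a` and `Y ∈ 𝒴` containing `b`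
does the job.
-/

open Finset

section HeavyEntries

variable {ι α : Type*} [Fintype ι] [DecidableEq α]

def withEntry (𝒳 : Finset (ι → α)) (a : α) : Finset (ι → α) :=
  𝒳.filter fun X => ∃ i, X i = a

theorem mem_withEntry {𝒳 : Finset (ι → α)} {a : α} {X : ι → α} :
    X ∈ withEntry 𝒳 a ↔ X ∈ 𝒳 ∧ ∃ i, X i = a :=
  mem_filter

theorem withEntry_subset (𝒳 : Finset (ι → α)) (a : α) : withEntry 𝒳 a ⊆ 𝒳 :=
  filter_subset _ _

variable [Fintype α]

def heavyEntries (𝒳 : Finset (ι → α)) : Finset α :=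
  univ.filter fun a => #𝒳 ≤ 2 * Fintype.card α * #(withEntry 𝒳 a)

theorem mem_heavyEntries {𝒳 : Finset (ι → α)} {a : α} :
    a ∈ heavyEntries 𝒳 ↔ #𝒳 ≤ 2 * Fintype.card α * #(withEntry 𝒳 a) := by
  simp [heavyEntries]

theorem card_le_card_pow_add_sum_withEntry (𝒳 : Finset (ι → α)) (H : Finset α) :
    #𝒳 ≤ #H ^ Fintype.card ι + ∑ a ∈ Hᶜ, #(withEntry 𝒳 a) := by
  classical
  have hinside : #(𝒳.filter fun X => ∀ i, X i ∈ H) ≤ #H ^ Fintype.card ι := by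
    calc #(𝒳.filter fun X => ∀ i, X i ∈ H)
        ≤ #(Fintype.piFinset fun _ : ι => H) :=
          card_le_card fun X hX => Fintype.mem_piFinset.2 (mem_filter.1 hX).2
      _ = #H ^ Fintype.card ι := by simp
  have houtside : #(𝒳.filter fun X => ¬ ∀ i, X i ∈ H) ≤ ∑ a ∈ Hᶜ, #(withEntry 𝒳 a) := by
    refine (card_le_card fun X hX => ?_).trans card_biUnion_le
    obtain ⟨hX𝒳, hnot⟩ := mem_filter.1 hX
    obtain ⟨i, hi⟩ := not_forall.1 hnot
    exact mem_biUnion.2 ⟨X i, mem_compl.2 hi, mem_withEntry.2 ⟨hX𝒳, i, rfl⟩⟩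
  rw [← card_filter_add_card_filter_not (fun X => ∀ i, X i ∈ H)]
  exact add_le_add hinside houtside

theorem card_le_two_mul_card_heavyEntries_pow [Nonempty α] (𝒳 : Finset (ι → α)) :
    #𝒳 ≤ 2 * #(heavyEntries 𝒳) ^ Fintype.card ι := by
  set N := Fintype.card α
  have hlight : 2 * N * ∑ a ∈ (heavyEntries 𝒳)ᶜ, #(withEntry 𝒳 a) ≤ N * #𝒳 := by
    calc 2 * N * ∑ a ∈ (heavyEntries 𝒳)ᶜ, #(withEntry 𝒳 a)
        = ∑ a ∈ (heavyEntries 𝒳)ᶜ, 2 * N * #(withEntry 𝒳 a) := mul_sum _ _ _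
      _ ≤ ∑ _a ∈ (heavyEntries 𝒳)ᶜ, #𝒳 := sum_le_sum fun a ha => by
          have hlt : ¬ #𝒳 ≤ 2 * N * #(withEntry 𝒳 a) := by simpa [mem_heavyEntries] using ha
          omega
      _ ≤ N * #𝒳 := by rw [sum_const, smul_eq_mul]; exact Nat.mul_le_mul_right _ (card_le_univ _)
  have hcover := card_le_card_pow_add_sum_withEntry 𝒳 (heavyEntries 𝒳)
  have hN : 0 < N := Fintype.card_pos
  refine Nat.le_of_mul_le_mul_left ?_ hN
  nlinarith

theorem lt_card_heavyEntries [Nonempty α] (𝒳 : Finset (ι → α)) (k : ℕ)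
    (h : 2 * k ^ Fintype.card ι < #𝒳) : k < #(heavyEntries 𝒳) :=
  lt_of_pow_lt_pow_left₀ (Fintype.card ι) (Nat.zero_le _)
    (by linarith [card_le_two_mul_card_heavyEntries_pow 𝒳])

end HeavyEntries

theorem exists_xor_eq_of_two_pow_lt_card_add_card {n : ℕ} (A B : Finset (Fin n → Bool))
    (s : Fin n → Bool) (h : 2 ^ n < #A + #B) :
    ∃ a ∈ A, ∃ b ∈ B, s = fun t => Bool.xor (a t) (b t) := by
  set σ : (Fin n → Bool) → (Fin n → Bool) := fun b t => Bool.xor (b t) (s t)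
  have hσ : Function.Involutive σ := fun b => funext fun t => by simp [σ]
  obtain ⟨a, ha⟩ := inter_nonempty_of_card_lt_card_add_card (subset_univ A)
    (subset_univ (B.image σ)) (by simpa [card_image_of_injective _ hσ.injective] using h)
  obtain ⟨haA, haB⟩ := mem_inter.1 ha
  obtain ⟨b, hb, rfl⟩ := mem_image.1 haB
  exact ⟨σ b, haA, b, hb, funext fun t => by
    simp only [σ]; cases b t <;> cases s t <;> rfl⟩

theorem two_pow_lt_card_heavyEntries {n m : ℕ} (𝒵 𝒲 : Finset (Fin m → Fin n → Bool))
    (h : 2 ^ (2 * n * m - m + 2) ≤ #𝒵 * #𝒲) : 2 ^ (n - 1) < #(heavyEntries 𝒵) := by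
  have hexp : 2 ^ ((n - 1) * m + 2) * 2 ^ (n * m) = 2 ^ (2 * n * m - m + 2) := by
    rw [← pow_add]
    congr 1
    rcases n with _ | k
    · simp
    · have : 2 * (k + 1) * m = k * m + (k + 1) * m + m := by ring
      simp only [Nat.add_sub_cancel]
      omega
  have h𝒲 : #𝒲 ≤ 2 ^ (n * m) := by simpa [← pow_mul] using card_le_univ 𝒲
  have h𝒵 : 2 ^ ((n - 1) * m + 2) ≤ #𝒵 :=
    Nat.le_of_mul_le_mul_right ((hexp ▸ h).trans (Nat.mul_le_mul_left _ h𝒲)) (by positivity)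
  refine lt_card_heavyEntries 𝒵 _ ?_
  rw [Fintype.card_fin, ← pow_mul]
  rw [pow_add] at h𝒵
  have : 0 < 2 ^ ((n - 1) * m) := by positivity
  omega

theorem stmt0_general (n m : ℕ)
    (𝒳 𝒴 : Finset (Fin m → Fin n → Bool))
    (hsize : (2 : ℕ) ^ (2 * n * m - m + 2) ≤ 𝒳.card * 𝒴.card)
    (s : Fin n → Bool) :
    ∃ 𝒳' 𝒴' : Finset (Fin m → Fin n → Bool),
      𝒳' ⊆ 𝒳 ∧ 𝒴' ⊆ 𝒴 ∧
      ((𝒳.card : ℝ) * (𝒴.card : ℝ)) / 2 ^ (2 * n + 2) ≤ (𝒳'.card : ℝ) * (𝒴'.card : ℝ) ∧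
      ∀ X ∈ 𝒳', ∀ Y ∈ 𝒴', ∃ i j : Fin m, s = fun t => Bool.xor (X i t) (Y j t) := by
  obtain ⟨a, ha, b, hb, hab⟩ := exists_xor_eq_of_two_pow_lt_card_add_card
    (heavyEntries 𝒳) (heavyEntries 𝒴) s <| by
    have hX := two_pow_lt_card_heavyEntries 𝒳 𝒴 hsize
    have hY := two_pow_lt_card_heavyEntries 𝒴 𝒳 (mul_comm #𝒳 #𝒴 ▸ hsize)
    have : 2 ^ n ≤ 2 * 2 ^ (n - 1) := by
      rw [← pow_succ']; exact Nat.pow_le_pow_right two_pos (by omega)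
    omega
  refine ⟨withEntry 𝒳 a, withEntry 𝒴 b, withEntry_subset _ _, withEntry_subset _ _, ?_, ?_⟩
  · have hXa : #𝒳 ≤ 2 * 2 ^ n * #(withEntry 𝒳 a) := by
      simpa using mem_heavyEntries.1 ha
    have hYb : #𝒴 ≤ 2 * 2 ^ n * #(withEntry 𝒴 b) := by
      simpa using mem_heavyEntries.1 hb
    rw [div_le_iff₀ (by positivity)]
    have hprod := Nat.mul_le_mul hXa hYb
    have hpow : (2 : ℝ) ^ (2 * n + 2) = 2 * 2 ^ n * (2 * 2 ^ n) := by ring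
    rw [hpow]
    exact_mod_cast hprod.trans_eq (by ring)
  · rintro X hX Y hY
    obtain ⟨i, hi⟩ := (mem_withEntry.1 hX).2
    obtain ⟨j, hj⟩ := (mem_withEntry.1 hY).2
    exact ⟨i, j, by rw [hi, hj, hab]⟩

/-- An instance of `XOR-Missing-String(n,m)` is a pair of lists `X Y : Fin m → Fin n → Bool`.
A string `s : Fin n → Bool` fails to be a solution iff `s = X i ⊕ Y j` for some `i j`. -/
theorem stmt0 (n m : ℕ) (hn : 1 ≤ n) (hm : 1 ≤ m)
    (hm2 : (m : ℝ) < (2 : ℝ) ^ ((n : ℝ) / 2))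
    (𝒳 𝒴 : Finset (Fin m → Fin n → Bool))
    (hsize : (2 : ℕ) ^ (2 * n * m - m + 2) ≤ 𝒳.card * 𝒴.card)
    (s : Fin n → Bool) :
    ∃ 𝒳' 𝒴' : Finset (Fin m → Fin n → Bool),
      𝒳' ⊆ 𝒳 ∧ 𝒴' ⊆ 𝒴 ∧
      ((𝒳.card : ℝ) * (𝒴.card : ℝ)) / 2 ^ (2 * n + 2) ≤ (𝒳'.card : ℝ) * (𝒴'.card : ℝ) ∧
      ∀ X ∈ 𝒳', ∀ Y ∈ 𝒴', ∃ i j : Fin m, s = fun t => Bool.xor (X i t) (Y j t) :=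
  stmt0_general n m 𝒳 𝒴 hsize s
end

section
/- Let n ≥ 1 and m ≥ 1 be integers and let 𝒳 ⊆ ({0,1}^n)^m be a set of lists of m strings of length n. For a string s ∈ {0,1}^n let cx_s = |{X ∈ 𝒳 : s appears in the list X}|. Let x_1, …, x_{2^n} be an enumeration of all n-bit strings sorted so that cx_{x_1} ≥ cx_{x_2} ≥ … ≥ cx_{x_{2^n}}. Then for every 1 ≤ i ≤ 2^n, cx_{x_i} ≥ (|𝒳| − (i−1)^m)/(2^n − i + 1) (as an inequality of rational numbers). -/
/-- For a set `𝒳` of lists of `m` strings of length `n`, let `cx s` count the lists in which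
`s` appears. If `x` enumerates all `2^n` strings in non-increasing order of `cx`, then the
`i`-th string (0-indexed, so `x i = x_{i+1}` in 1-indexed notation) occurs in at least
`(|𝒳| − i^m)/(2^n − i)` lists. -/
theorem stmt1 (n m : ℕ) (hn : 1 ≤ n) (hm : 1 ≤ m)
    (𝒳 : Finset (Fin m → Fin n → Bool))
    (cx : (Fin n → Bool) → ℕ)
    (hcx : ∀ s : Fin n → Bool, cx s = (𝒳.filter (fun X => ∃ i : Fin m, X i = s)).card)
    (x : Fin (2 ^ n) → Fin n → Bool)
    (hbij : Function.Bijective x)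
    (hsorted : ∀ i j : Fin (2 ^ n), i ≤ j → cx (x j) ≤ cx (x i)) :
    ∀ i : Fin (2 ^ n),
      ((𝒳.card : ℚ) - ((i : ℕ) : ℚ) ^ m) / (((2 : ℚ) ^ n) - ((i : ℕ) : ℚ)) ≤ (cx (x i) : ℚ) := by
  intro i
  classical
  -- the set of "small" strings
  set S : Finset (Fin n → Bool) := (Finset.Iio i).image x with hS
  have hScard : S.card = (i : ℕ) := by
    rw [hS, Finset.card_image_of_injective _ hbij.1, Fin.card_Iio]
  set p : (Fin m → Fin n → Bool) → Prop := fun X => ∀ j : Fin m, X j ∈ S with hp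
  set A := 𝒳.filter p with hA
  set B := 𝒳.filter (fun X => ¬ p X) with hB
  have hAB : A.card + B.card = 𝒳.card := Finset.card_filter_add_card_filter_not _
  -- bound on A
  have hAcard : A.card ≤ (i : ℕ) ^ m := by
    have hsub : A ⊆ Fintype.piFinset (fun _ : Fin m => S) := by
      intro X hX
      rw [Fintype.mem_piFinset]
      exact (Finset.mem_filter.mp hX).2
    calc A.card ≤ (Fintype.piFinset (fun _ : Fin m => S)).card := Finset.card_le_card hsub
      _ = (i : ℕ) ^ m := by
        rw [Fintype.card_piFinset]
        simp [hScard]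
  -- bound on B
  have hBcard : B.card ≤ (2 ^ n - (i : ℕ)) * cx (x i) := by
    have hsub : B ⊆ (Finset.Ici i).biUnion
        (fun t => 𝒳.filter (fun X => ∃ j : Fin m, X j = x t)) := by
      intro X hX
      rw [Finset.mem_filter] at hX
      obtain ⟨hX𝒳, hnp⟩ := hX
      rw [hp] at hnp
      obtain ⟨j, hj⟩ := not_forall.mp hnp
      obtain ⟨t, ht⟩ := hbij.2 (X j)
      have hti : i ≤ t := by
        by_contra hlt
        push_neg at hlt
        exact hj (Finset.mem_image.mpr ⟨t, Finset.mem_Iio.mpr hlt, ht⟩)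
      exact Finset.mem_biUnion.mpr ⟨t, Finset.mem_Ici.mpr hti, Finset.mem_filter.mpr
        ⟨hX𝒳, j, ht.symm⟩⟩
    calc B.card ≤ ∑ t ∈ Finset.Ici i, (𝒳.filter (fun X => ∃ j : Fin m, X j = x t)).card :=
          le_trans (Finset.card_le_card hsub) (Finset.card_biUnion_le)
      _ = ∑ t ∈ Finset.Ici i, cx (x t) := by
          refine Finset.sum_congr rfl fun t _ => ?_
          rw [hcx]
      _ ≤ ∑ t ∈ Finset.Ici i, cx (x i) := by
          refine Finset.sum_le_sum fun t ht => hsorted i t (Finset.mem_Ici.mp ht)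
      _ = (2 ^ n - (i : ℕ)) * cx (x i) := by
          rw [Finset.sum_const, smul_eq_mul, Fin.card_Ici]
  have hkey : 𝒳.card ≤ (i : ℕ) ^ m + (2 ^ n - (i : ℕ)) * cx (x i) := by
    omega
  -- pass to ℚ
  have hilt : (i : ℕ) < 2 ^ n := i.isLt
  have hpos : (0 : ℚ) < (2 : ℚ) ^ n - ((i : ℕ) : ℚ) := by
    have : ((i : ℕ) : ℚ) < ((2 ^ n : ℕ) : ℚ) := by exact_mod_cast hilt
    push_cast at this
    linarith
  rw [div_le_iff₀ hpos]
  have hQ : ((𝒳.card : ℚ)) ≤ ((i : ℕ) : ℚ) ^ m + ((2 : ℚ) ^ n - ((i : ℕ) : ℚ)) * (cx (x i) : ℚ) := by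
    have := hkey
    have h2 : ((2 ^ n - (i : ℕ) : ℕ) : ℚ) = (2 : ℚ) ^ n - ((i : ℕ) : ℚ) := by
      push_cast [Nat.cast_sub hilt.le]
      ring
    calc ((𝒳.card : ℚ)) ≤ (((i : ℕ) ^ m + (2 ^ n - (i : ℕ)) * cx (x i) : ℕ) : ℚ) := by
          exact_mod_cast this
      _ = ((i : ℕ) : ℚ) ^ m + ((2 : ℚ) ^ n - ((i : ℕ) : ℚ)) * (cx (x i) : ℚ) := by
          push_cast [Nat.cast_sub hilt.le]; ring
  linarith
end

section
/- Let n ≥ 1, 1 ≤ m < 2^{n/2}, and a ≥ 0 be integers. Let R = 𝒳 × 𝒴 ⊆ {0,1}^{nm+a} × {0,1}^{nm+a} be a rectangle of size at least 2^{2nm+2a−m+2}, where each element of 𝒳 (resp. 𝒴) is interpreted as a pair (X, t_x) (resp. (Y, t_y)) with (X,Y) an instance of XOR-Missing-String(n,m) and t_x, t_y ∈ {0,1}^a auxiliary strings. Let s ∈ {0,1}^n be any string. Then there exists a subrectangle R' of R of size at least 2^{−2n−2}·|R| such that for every ((X,t_x),(Y,t_y)) ∈ R', s is not a solution to XOR-Missing-String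 on (X,Y). -/
/-!
Pick `u` and keep the inputs `X` having `u` as a row and the inputs `Y` having `s ⊕ u` as a row:
then `s = x_i ⊕ y_j` on the whole subrectangle. If no `u` gives a subrectangle of relative size
`2^(-2n-2)`, then for every `u` one of the two sides is smaller than a `2^(-n-1)` fraction, so on
one side this happens for at least half of all `u`, forming a set `U`. An input on that side
either has all its rows outside `U`, which leaves at most `(2^(n-1))^m · 2^a` inputs, or
has a row in `U`, which covers at most half of that side. So that side has at most
`2^(nm - m + a + 1)` elements, too few for the rectangle to have size `2^(2nm + 2a - m + 2)`.
-/

open Finset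

section

variable {ι α β : Type*} [Fintype ι] [DecidableEq α]

def withRow (𝒵 : Finset ((ι → α) × β)) (v : α) : Finset ((ι → α) × β) :=
  𝒵.filter fun Z => ∃ i, Z.1 i = v

theorem withRow_subset (𝒵 : Finset ((ι → α) × β)) (v : α) : withRow 𝒵 v ⊆ 𝒵 :=
  filter_subset _ _

theorem mem_withRow {𝒵 : Finset ((ι → α) × β)} {v : α} {Z : (ι → α) × β} :
    Z ∈ withRow 𝒵 v ↔ Z ∈ 𝒵 ∧ ∃ i, Z.1 i = v :=
  mem_filter

variable [Fintype α] [Fintype β]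

theorem card_le_card_compl_pow_add_sum_card_withRow
    (𝒵 : Finset ((ι → α) × β)) (U : Finset α) :
    #𝒵 ≤ #Uᶜ ^ Fintype.card ι * Fintype.card β + ∑ u ∈ U, #(withRow 𝒵 u) := by
  classical
  rw [← card_filter_add_card_filter_not (s := 𝒵) fun Z => ∀ i, Z.1 i ∉ U]
  gcongr
  · calc #(𝒵.filter fun Z => ∀ i, Z.1 i ∉ U)
        ≤ #(Fintype.piFinset (fun _ : ι => Uᶜ) ×ˢ (univ : Finset β)) := by
          refine card_le_card fun Z hZ => ?_
          simp only [mem_filter] at hZ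
          simpa [Fintype.mem_piFinset] using hZ.2
      _ = #Uᶜ ^ Fintype.card ι * Fintype.card β := by
          simp [card_product, Fintype.card_piFinset, prod_const]
  · calc #(𝒵.filter fun Z => ¬∀ i, Z.1 i ∉ U)
        ≤ #(U.biUnion (withRow 𝒵)) := by
          refine card_le_card fun Z hZ => ?_
          simp only [mem_filter, not_forall, not_not] at hZ
          obtain ⟨hZ, i, hi⟩ := hZ
          exact mem_biUnion.2 ⟨Z.1 i, hi, mem_withRow.2 ⟨hZ, i, rfl⟩⟩
      _ ≤ ∑ u ∈ U, #(withRow 𝒵 u) := card_biUnion_le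

theorem card_mul_two_pow_le_of_card_withRow_small [Nonempty α]
    (𝒵 : Finset ((ι → α) × β)) (U : Finset α) (hU : Fintype.card α ≤ 2 * #U)
    (hsmall : ∀ u ∈ U, #(withRow 𝒵 u) * (2 * Fintype.card α) ≤ #𝒵) :
    #𝒵 * 2 ^ Fintype.card ι ≤ 2 * (Fintype.card α ^ Fintype.card ι * Fintype.card β) := by
  have hsplit := card_le_card_compl_pow_add_sum_card_withRow 𝒵 U
  set N := Fintype.card α
  set m := Fintype.card ι
  have hN : 0 < N := Fintype.card_pos
  have hhit : (∑ u ∈ U, #(withRow 𝒵 u)) * 2 ≤ #𝒵 := by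
    refine Nat.le_of_mul_le_mul_right ?_ hN
    calc (∑ u ∈ U, #(withRow 𝒵 u)) * 2 * N
        = ∑ u ∈ U, #(withRow 𝒵 u) * (2 * N) := by simp only [sum_mul, mul_assoc]
      _ ≤ ∑ _u ∈ U, #𝒵 := sum_le_sum hsmall
      _ = #U * #𝒵 := by rw [sum_const, smul_eq_mul]
      _ ≤ #𝒵 * N := by
          rw [mul_comm]
          exact Nat.mul_le_mul_left _ (card_le_univ U)
  have hcompl : #Uᶜ * 2 ≤ N := by
    rw [card_compl]
    omega
  have hmiss : #Uᶜ ^ m * Fintype.card β * 2 ^ m ≤ N ^ m * Fintype.card β := by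
    rw [mul_right_comm, ← mul_pow]
    gcongr
  calc #𝒵 * 2 ^ m ≤ 2 * (#Uᶜ ^ m * Fintype.card β) * 2 ^ m := by gcongr; omega
    _ ≤ 2 * (N ^ m * Fintype.card β) := by rw [mul_assoc]; gcongr

theorem card_mul_card_mul_two_pow_le_of_card_withRow_small [Nonempty α]
    (𝒵 𝒲 : Finset ((ι → α) × β)) (U : Finset α) (hU : Fintype.card α ≤ 2 * #U)
    (hsmall : ∀ u ∈ U, #(withRow 𝒵 u) * (2 * Fintype.card α) ≤ #𝒵) :
    #𝒵 * #𝒲 * 2 ^ Fintype.card ι ≤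
      2 * (Fintype.card α ^ Fintype.card ι * Fintype.card β) ^ 2 := by
  classical
  have h𝒵 := card_mul_two_pow_le_of_card_withRow_small 𝒵 U hU hsmall
  have h𝒲 : #𝒲 ≤ Fintype.card α ^ Fintype.card ι * Fintype.card β := by
    simpa [Fintype.card_prod, Fintype.card_fun] using card_le_univ 𝒲
  calc #𝒵 * #𝒲 * 2 ^ Fintype.card ι = #𝒵 * 2 ^ Fintype.card ι * #𝒲 := by ring
    _ ≤ 2 * (Fintype.card α ^ Fintype.card ι * Fintype.card β) *
          (Fintype.card α ^ Fintype.card ι * Fintype.card β) := by gcongr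
    _ = _ := by ring

theorem exists_card_mul_card_le_card_withRow_mul_card_withRow [Nonempty α] (e : α ≃ α)
    (𝒳 𝒴 : Finset ((ι → α) × β))
    (hsize : 2 * (Fintype.card α ^ Fintype.card ι * Fintype.card β) ^ 2 <
      #𝒳 * #𝒴 * 2 ^ Fintype.card ι) :
    ∃ u, #𝒳 * #𝒴 ≤ #(withRow 𝒳 u) * #(withRow 𝒴 (e u)) * (2 * Fintype.card α) ^ 2 := by
  classical
  set c := 2 * Fintype.card α
  by_contra! hlarge
  have hsmall : ∀ u, #(withRow 𝒳 u) * c ≤ #𝒳 ∨ #(withRow 𝒴 (e u)) * c ≤ #𝒴 := by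
    intro u
    by_contra! h
    have := Nat.mul_lt_mul'' h.1 h.2
    nlinarith [hlarge u]
  set UX := univ.filter fun u => #(withRow 𝒳 u) * c ≤ #𝒳
  set UY := univ.filter fun v => #(withRow 𝒴 v) * c ≤ #𝒴
  have hcover : Fintype.card α ≤ #UX + #UY :=
    calc Fintype.card α = #(univ : Finset α) := card_univ.symm
      _ ≤ #(UX ∪ UY.map e.symm.toEmbedding) := by
          refine card_le_card fun u _ => ?_
          rcases hsmall u with h | h
          · exact mem_union_left _ (mem_filter.2 ⟨mem_univ u, h⟩)
          · exact mem_union_right _ (mem_map_equiv.2 (by simpa [UY] using h))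
      _ ≤ #UX + #(UY.map e.symm.toEmbedding) := card_union_le _ _
      _ = #UX + #UY := by rw [card_map]
  rcases le_or_gt (Fintype.card α) (2 * #UX) with hX | hY
  · have := card_mul_card_mul_two_pow_le_of_card_withRow_small 𝒳 𝒴 UX hX
      fun u hu => (mem_filter.1 hu).2
    omega
  · have := card_mul_card_mul_two_pow_le_of_card_withRow_small 𝒴 𝒳 UY (by omega)
      fun v hv => (mem_filter.1 hv).2
    rw [mul_comm #𝒴] at this
    omega

end

theorem stmt3_general (n m a : ℕ) (hn : 1 ≤ n)
    (𝒳 𝒴 : Finset ((Fin m → Fin n → Bool) × (Fin a → Bool)))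
    (hsize : (2 : ℕ) ^ (2 * n * m + 2 * a - m + 2) ≤ 𝒳.card * 𝒴.card)
    (s : Fin n → Bool) :
    ∃ 𝒳' 𝒴' : Finset ((Fin m → Fin n → Bool) × (Fin a → Bool)),
      𝒳' ⊆ 𝒳 ∧ 𝒴' ⊆ 𝒴 ∧
      ((𝒳.card : ℝ) * (𝒴.card : ℝ)) / 2 ^ (2 * n + 2) ≤ (𝒳'.card : ℝ) * (𝒴'.card : ℝ) ∧
      ∀ X ∈ 𝒳', ∀ Y ∈ 𝒴', ∃ i j : Fin m, s = fun t => Bool.xor (X.1 i t) (Y.1 j t) := by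
  let e : Equiv.Perm (Fin n → Bool) := Function.Involutive.toPerm (fun v t => s t ^^ v t)
    fun v => funext fun t => Bool.bne_self_left (s t) (v t)
  have hsize' : 2 * ((2 ^ n) ^ m * 2 ^ a) ^ 2 < #𝒳 * #𝒴 * 2 ^ m := by
    have hmn : m ≤ n * m := Nat.le_mul_of_pos_left m hn
    calc 2 * ((2 ^ n) ^ m * 2 ^ a) ^ 2 < 2 ^ (2 * n * m + 2 * a - m + 2) * 2 ^ m := by
          rw [← pow_mul, ← pow_add, ← pow_mul, ← pow_add, ← pow_succ']
          exact Nat.pow_lt_pow_right (by norm_num) (by rw [Nat.mul_assoc]; omega)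
      _ ≤ #𝒳 * #𝒴 * 2 ^ m := by gcongr
  obtain ⟨u, hu⟩ := exists_card_mul_card_le_card_withRow_mul_card_withRow e 𝒳 𝒴
    (by simpa using hsize')
  refine ⟨withRow 𝒳 u, withRow 𝒴 (e u), withRow_subset _ _, withRow_subset _ _, ?_, ?_⟩
  · rw [div_le_iff₀ (by positivity)]
    have hc : (2 * Fintype.card (Fin n → Bool)) ^ 2 = 2 ^ (2 * n + 2) := by simp; ring
    exact_mod_cast hc ▸ hu
  · rintro X hX Y hY
    obtain ⟨-, i, hi⟩ := mem_withRow.1 hX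
    obtain ⟨-, j, hj⟩ := mem_withRow.1 hY
    refine ⟨i, j, funext fun t => ?_⟩
    rw [hi, hj]
    change s t = (u t ^^ (s t ^^ u t))
    rw [Bool.xor_comm (s t)]
    exact (Bool.bne_self_left _ _).symm

/-- Rectangle lower bound for XOR-Missing-String with auxiliary inputs: each element of the
rectangle is a pair of an XOR-Missing-String list and an `a`-bit auxiliary string. -/
theorem stmt3 (n m a : ℕ) (hn : 1 ≤ n) (hm : 1 ≤ m)
    (hm2 : (m : ℝ) < (2 : ℝ) ^ ((n : ℝ) / 2))
    (𝒳 𝒴 : Finset ((Fin m → Fin n → Bool) × (Fin a → Bool)))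
    (hsize : (2 : ℕ) ^ (2 * n * m + 2 * a - m + 2) ≤ 𝒳.card * 𝒴.card)
    (s : Fin n → Bool) :
    ∃ 𝒳' 𝒴' : Finset ((Fin m → Fin n → Bool) × (Fin a → Bool)),
      𝒳' ⊆ 𝒳 ∧ 𝒴' ⊆ 𝒴 ∧
      ((𝒳.card : ℝ) * (𝒴.card : ℝ)) / 2 ^ (2 * n + 2) ≤ (𝒳'.card : ℝ) * (𝒴'.card : ℝ) ∧
      ∀ X ∈ 𝒳', ∀ Y ∈ 𝒴', ∃ i j : Fin m, s = fun t => Bool.xor (X.1 i t) (Y.1 j t) :=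
  stmt3_general n m a hn 𝒳 𝒴 hsize s
end

section
/- Let n ≥ 1, 1 ≤ m < 2^{n/2}, and k ≥ 1 be integers. Let R = 𝒳 × 𝒴 ⊆ {0,1}^{nm} × {0,1}^{nm} be a rectangle of size at least 2^{2nm−m+2+(2n+2)k}, and let s_1, …, s_k ∈ {0,1}^n be any k strings. Then there exists a subrectangle R' of R of size at least 2^{−(2n+2)k}·|R| such that for every (X,Y) ∈ R', none of s_1, …, s_k is a solution to XOR-Missing-String on (X,Y). -/
/-!
Fix a candidate `s`. Every instance in `{X : w is a row of X} × {Y : w ⊕ s is a row of Y}` has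
`s` as a non-solution. If all `2ⁿ` of these rectangles were small, each `w` would be rare
(in less than a `2⁻⁽ⁿ⁺¹⁾` fraction) among the rows of `𝒳` or among the shifted rows of `𝒴`.
A union bound then puts half of `𝒳` inside `Cᵐ` and half of `𝒴` inside `Dᵐ`, where `C` and `D`
are the strings not rare on the respective side, with `|C| + |D| ≤ 2ⁿ`; so
`|𝒳| |𝒴| ≤ 4 (|C| |D|)ᵐ ≤ 4 · 2^{(2n-2)m}`, which the size bound excludes. One of the
rectangles therefore keeps a `2^{-(2n+2)}` fraction, and we iterate over `s_1, …, s_k`.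
-/

open Finset

variable {ι α β : Type*} [Fintype ι] [DecidableEq α]

def rowHits (𝒳 : Finset (ι → α)) (w : α) : Finset (ι → α) :=
  𝒳.filter fun X => ∃ i, X i = w

theorem card_filter_exists_mem_le_sum_card_rowHits (𝒳 : Finset (ι → α)) (D : Finset α) :
    #(𝒳.filter fun X => ∃ i, X i ∈ D) ≤ ∑ w ∈ D, #(rowHits 𝒳 w) := by
  refine (card_le_card fun X hX => ?_).trans card_biUnion_le
  obtain ⟨hX𝒳, i, hi⟩ := mem_filter.1 hX
  exact mem_biUnion.2 ⟨X i, hi, mem_filter.2 ⟨hX𝒳, i, rfl⟩⟩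

variable [DecidableEq ι]

theorem card_filter_forall_mem_le_pow (𝒳 : Finset (ι → α)) (C : Finset α) :
    #(𝒳.filter fun X => ∀ i, X i ∈ C) ≤ #C ^ Fintype.card ι := by
  calc #(𝒳.filter fun X => ∀ i, X i ∈ C)
      ≤ #(Fintype.piFinset fun _ : ι => C) :=
        card_le_card fun X hX => Fintype.mem_piFinset.2 (mem_filter.1 hX).2
    _ = #C ^ Fintype.card ι := by simp [Fintype.card_piFinset]

variable [Fintype α] [Nonempty α]

/-- By a union bound, at most half of `𝒳` has a row in `D`. -/
theorem card_le_two_mul_card_compl_pow (𝒳 : Finset (ι → α)) (D : Finset α)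
    (hD : ∀ w ∈ D, 2 * Fintype.card α * #(rowHits 𝒳 w) ≤ #𝒳) :
    #𝒳 ≤ 2 * #Dᶜ ^ Fintype.card ι := by
  set N := Fintype.card α
  have hbad : N * (2 * #(𝒳.filter fun X => ∃ i, X i ∈ D)) ≤ N * #𝒳 :=
    calc N * (2 * #(𝒳.filter fun X => ∃ i, X i ∈ D))
        = 2 * N * #(𝒳.filter fun X => ∃ i, X i ∈ D) := by ring
      _ ≤ 2 * N * ∑ w ∈ D, #(rowHits 𝒳 w) :=
          Nat.mul_le_mul_left _ (card_filter_exists_mem_le_sum_card_rowHits 𝒳 D)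
      _ = ∑ w ∈ D, 2 * N * #(rowHits 𝒳 w) := mul_sum _ _ _
      _ ≤ #D * #𝒳 := by simpa using sum_le_sum hD
      _ ≤ N * #𝒳 := Nat.mul_le_mul_right _ (card_le_univ D)
  have hgood : #(𝒳.filter fun X => ¬∃ i, X i ∈ D) ≤ #Dᶜ ^ Fintype.card ι := by
    simpa only [not_exists, mem_compl] using card_filter_forall_mem_le_pow 𝒳 Dᶜ
  have hsplit := card_filter_add_card_filter_not (s := 𝒳) fun X => ∃ i, X i ∈ D
  have := Nat.le_of_mul_le_mul_left hbad Fintype.card_pos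
  omega

theorem exists_card_mul_card_le_rowHits (f : Equiv.Perm α) (𝒳 𝒴 : Finset (ι → α))
    (hsize : 4 * Fintype.card α ^ (2 * Fintype.card ι) < 4 ^ Fintype.card ι * (#𝒳 * #𝒴)) :
    ∃ w, #𝒳 * #𝒴 ≤ (2 * Fintype.card α) ^ 2 * (#(rowHits 𝒳 w) * #(rowHits 𝒴 (f w))) := by
  set N := Fintype.card α
  set m := Fintype.card ι
  by_contra! hsmall
  have hrare : ∀ w, 2 * N * #(rowHits 𝒳 w) ≤ #𝒳 ∨ 2 * N * #(rowHits 𝒴 (f w)) ≤ #𝒴 := by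
    intro w
    by_contra! hcommon
    have := Nat.mul_lt_mul'' hcommon.1 hcommon.2
    exact (hsmall w).not_ge (by linarith)
  set D := univ.filter fun w => 2 * N * #(rowHits 𝒳 w) ≤ #𝒳
  have hX : #𝒳 ≤ 2 * #Dᶜ ^ m :=
    card_le_two_mul_card_compl_pow 𝒳 D fun w hw => (mem_filter.1 hw).2
  have hY : #𝒴 ≤ 2 * #(Dᶜ.map f.toEmbedding)ᶜ ^ m := by
    refine card_le_two_mul_card_compl_pow 𝒴 _ fun v hv => ?_
    obtain ⟨w, hw, rfl⟩ := mem_map.1 hv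
    exact (hrare w).resolve_left fun h => mem_compl.1 hw (mem_filter.2 ⟨mem_univ w, h⟩)
  have hcompl : #(Dᶜ.map f.toEmbedding)ᶜ = #D := by
    rw [card_compl, card_map, card_compl, Nat.sub_sub_self (card_le_univ D)]
  rw [hcompl] at hY
  have hCD : 4 * (#Dᶜ * #D) ≤ N ^ 2 := by
    have : #Dᶜ + #D = N := by rw [card_compl]; exact Nat.sub_add_cancel (card_le_univ D)
    rw [← this]
    nlinarith [sq_nonneg ((#Dᶜ : ℤ) - #D)]
  have : 4 ^ m * (#𝒳 * #𝒴) ≤ 4 * N ^ (2 * m) :=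
    calc 4 ^ m * (#𝒳 * #𝒴) ≤ 4 ^ m * ((2 * #Dᶜ ^ m) * (2 * #D ^ m)) :=
          Nat.mul_le_mul_left _ (Nat.mul_le_mul hX hY)
      _ = 4 * (4 * (#Dᶜ * #D)) ^ m := by ring
      _ ≤ 4 * (N ^ 2) ^ m := Nat.mul_le_mul_left _ (Nat.pow_le_pow_left hCD m)
      _ = 4 * N ^ (2 * m) := by rw [pow_mul]
  exact hsize.not_ge this

theorem exists_subrectangle_forall_exists_eq_perm (τ : β → Equiv.Perm α) (k : ℕ)
    (s : Fin k → β) (𝒳 𝒴 : Finset (ι → α))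
    (hsize : 4 * Fintype.card α ^ (2 * Fintype.card ι) * (2 * Fintype.card α) ^ (2 * k) <
      4 ^ Fintype.card ι * (#𝒳 * #𝒴)) :
    ∃ 𝒳' ⊆ 𝒳, ∃ 𝒴' ⊆ 𝒴, #𝒳 * #𝒴 ≤ (2 * Fintype.card α) ^ (2 * k) * (#𝒳' * #𝒴') ∧
      ∀ X ∈ 𝒳', ∀ Y ∈ 𝒴', ∀ l, ∃ i j, Y j = τ (s l) (X i) := by
  set N := Fintype.card α
  set m := Fintype.card ι
  induction k generalizing 𝒳 𝒴 with
  | zero => exact ⟨𝒳, subset_rfl, 𝒴, subset_rfl, by simp, fun _ _ _ _ l => l.elim0⟩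
  | succ k ih =>
    have hround : 4 * N ^ (2 * m) < 4 ^ m * (#𝒳 * #𝒴) :=
      (Nat.le_mul_of_pos_right _ (by positivity)).trans_lt hsize
    obtain ⟨w, hw⟩ := exists_card_mul_card_le_rowHits (τ (s 0)) 𝒳 𝒴 hround
    set 𝒳₁ := rowHits 𝒳 w
    set 𝒴₁ := rowHits 𝒴 (τ (s 0) w)
    have hsize₁ : 4 * N ^ (2 * m) * (2 * N) ^ (2 * k) < 4 ^ m * (#𝒳₁ * #𝒴₁) := by
      refine Nat.lt_of_mul_lt_mul_left (a := (2 * N) ^ 2) ?_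
      calc (2 * N) ^ 2 * (4 * N ^ (2 * m) * (2 * N) ^ (2 * k))
          = 4 * N ^ (2 * m) * (2 * N) ^ (2 * (k + 1)) := by ring
        _ < 4 ^ m * (#𝒳 * #𝒴) := hsize
        _ ≤ 4 ^ m * ((2 * N) ^ 2 * (#𝒳₁ * #𝒴₁)) := Nat.mul_le_mul_left _ hw
        _ = (2 * N) ^ 2 * (4 ^ m * (#𝒳₁ * #𝒴₁)) := by ring
    obtain ⟨𝒳', h𝒳', 𝒴', h𝒴', hcard, hsol⟩ := ih (Fin.tail s) 𝒳₁ 𝒴₁ hsize₁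
    refine ⟨𝒳', h𝒳'.trans (filter_subset _ _), 𝒴', h𝒴'.trans (filter_subset _ _), ?_, ?_⟩
    · calc #𝒳 * #𝒴 ≤ (2 * N) ^ 2 * (#𝒳₁ * #𝒴₁) := hw
        _ ≤ (2 * N) ^ 2 * ((2 * N) ^ (2 * k) * (#𝒳' * #𝒴')) := Nat.mul_le_mul_left _ hcard
        _ = (2 * N) ^ (2 * (k + 1)) * (#𝒳' * #𝒴') := by ring
    · intro X hX Y hY l
      refine Fin.cases ?_ (hsol X hX Y hY) l
      obtain ⟨-, i, hi⟩ := mem_filter.1 (h𝒳' hX)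
      obtain ⟨-, j, hj⟩ := mem_filter.1 (h𝒴' hY)
      exact ⟨i, j, by rw [hi, hj]⟩

def xorPerm {n : ℕ} (s : Fin n → Bool) : Equiv.Perm (Fin n → Bool) :=
  Function.Involutive.toPerm (fun w t => Bool.xor (w t) (s t)) fun w => by
    funext t
    simp

theorem xorPerm_apply {n : ℕ} (s w : Fin n → Bool) :
    xorPerm s w = fun t => Bool.xor (w t) (s t) :=
  rfl

theorem four_mul_pow_mul_pow_lt (n m k : ℕ) (hm : 1 ≤ m) :
    4 * (2 ^ n) ^ (2 * m) * (2 * 2 ^ n) ^ (2 * k) <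
      4 ^ m * 2 ^ (2 * n * m - m + 2 + (2 * n + 2) * k) := by
  have hl : 4 * (2 ^ n) ^ (2 * m) * (2 * 2 ^ n) ^ (2 * k) =
      2 ^ (2 + 2 * n * m + (2 * n + 2) * k) := by
    ring
  have hr : 4 ^ m * 2 ^ (2 * n * m - m + 2 + (2 * n + 2) * k) =
      2 ^ (2 * m + (2 * n * m - m + 2 + (2 * n + 2) * k)) := by
    rw [pow_add 2 (2 * m), pow_mul]
    norm_num
  rw [hl, hr]
  exact Nat.pow_lt_pow_right (by norm_num) (by omega)

theorem stmt4_general (n m k : ℕ) (hm : 1 ≤ m)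
    (𝒳 𝒴 : Finset (Fin m → Fin n → Bool))
    (hsize : (2 : ℕ) ^ (2 * n * m - m + 2 + (2 * n + 2) * k) ≤ 𝒳.card * 𝒴.card)
    (s : Fin k → Fin n → Bool) :
    ∃ 𝒳' 𝒴' : Finset (Fin m → Fin n → Bool),
      𝒳' ⊆ 𝒳 ∧ 𝒴' ⊆ 𝒴 ∧
      ((𝒳.card : ℝ) * (𝒴.card : ℝ)) / 2 ^ ((2 * n + 2) * k) ≤ (𝒳'.card : ℝ) * (𝒴'.card : ℝ) ∧
      ∀ X ∈ 𝒳', ∀ Y ∈ 𝒴', ∀ l : Fin k,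
        ∃ i j : Fin m, s l = fun t => Bool.xor (X i t) (Y j t) := by
  have hN : Fintype.card (Fin n → Bool) = 2 ^ n := by simp
  obtain ⟨𝒳', h𝒳', 𝒴', h𝒴', hcard, hsol⟩ :=
    exists_subrectangle_forall_exists_eq_perm xorPerm k s 𝒳 𝒴 <| by
      rw [hN, Fintype.card_fin]
      exact (four_mul_pow_mul_pow_lt n m k hm).trans_le (Nat.mul_le_mul_left _ hsize)
  refine ⟨𝒳', 𝒴', h𝒳', h𝒴', ?_, fun X hX Y hY l => ?_⟩
  · rw [hN, show (2 * 2 ^ n) ^ (2 * k) = 2 ^ ((2 * n + 2) * k) by ring] at hcard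
    rw [div_le_iff₀ (by positivity), mul_comm _ (2 ^ _)]
    exact_mod_cast hcard
  · obtain ⟨i, j, hij⟩ := hsol X hX Y hY l
    refine ⟨i, j, funext fun t => ?_⟩
    simp [hij, xorPerm_apply]

/-- Rectangle lower bound against lists of `k` candidate answers: given a large enough rectangle
and `k` strings, there is a large subrectangle on which none of the `k` strings is a solution
to XOR-Missing-String. -/
theorem stmt4 (n m k : ℕ) (hn : 1 ≤ n) (hm : 1 ≤ m) (hk : 1 ≤ k)
    (hm2 : (m : ℝ) < (2 : ℝ) ^ ((n : ℝ) / 2))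
    (𝒳 𝒴 : Finset (Fin m → Fin n → Bool))
    (hsize : (2 : ℕ) ^ (2 * n * m - m + 2 + (2 * n + 2) * k) ≤ 𝒳.card * 𝒴.card)
    (s : Fin k → Fin n → Bool) :
    ∃ 𝒳' 𝒴' : Finset (Fin m → Fin n → Bool),
      𝒳' ⊆ 𝒳 ∧ 𝒴' ⊆ 𝒴 ∧
      ((𝒳.card : ℝ) * (𝒴.card : ℝ)) / 2 ^ ((2 * n + 2) * k) ≤ (𝒳'.card : ℝ) * (𝒴'.card : ℝ) ∧
      ∀ X ∈ 𝒳', ∀ Y ∈ 𝒴', ∀ l : Fin k,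
        ∃ i j : Fin m, s l = fun t => Bool.xor (X i t) (Y j t) :=
  stmt4_general n m k hm 𝒳 𝒴 hsize s
end

section
/- Let n ≥ 1 and 20n ≤ m < 2^{n/2} be integers. Every approximate majority cover that solves XOR-Missing-String(n,m) with error at most 2^{−5n} has size greater than 2^{m/2}. -/
/-!
Double counting over the cover: the covering condition gives `∑ₜ |Sₜ||Tₜ| ≥ 2^{2nm}`, and the
error condition bounds the number of wrongly labelled (rectangle, instance) incidences by
`ε ∑ₜ |Sₜ||Tₜ|`. If both sides of a rectangle have at least `D = 4 · 2^{(n-1)m}` lists, then on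
each side more than half of all strings are heavy, i.e. occur in a `4^{-n}` fraction of its lists;
so some heavy `v` of Alice and heavy `w` of Bob have `v ⊕ w = s`, and a `16^{-n} = 2ⁿ ε` fraction
of the rectangle is wrongly labelled. Hence the large rectangles carry at most half of
`∑ₜ |Sₜ||Tₜ|`, while each small one has area at most `D · 2^{nm}`; this forces
`N ≥ 2^m / 8 > 2^{m/2}`.
-/

open Finset

theorem card_filter_mem_and_mem {α β : Type*} [Fintype α] [Fintype β] [DecidableEq α]
    [DecidableEq β] (s : Finset α) (t : Finset β) :
    #{p : α × β | p.1 ∈ s ∧ p.2 ∈ t} = #s * #t := by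
  rw [← card_product]
  congr 1
  ext p
  simp

theorem sum_card_filter_comm {ι β : Type*} [Fintype ι] [Fintype β] (R : ι → β → Prop)
    [∀ t b, Decidable (R t b)] : ∑ b, #{t | R t b} = ∑ t, #{b | R t b} := by
  simp only [card_filter]
  exact sum_comm

section ApproxMajorityCover

variable {ι α : Type*} [Fintype ι] [Fintype α] [DecidableEq α] (S T : ι → Finset α)

theorem sq_card_le_sum_card_mul_card (hcover : ∀ x y, ∃ t, x ∈ S t ∧ y ∈ T t) :
    Fintype.card α ^ 2 ≤ ∑ t, #(S t) * #(T t) := calc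
  Fintype.card α ^ 2 = ∑ _p : α × α, 1 := by simp [sq]
  _ ≤ ∑ p : α × α, #{t | p.1 ∈ S t ∧ p.2 ∈ T t} :=
    sum_le_sum fun p _ => by
      obtain ⟨t, ht⟩ := hcover p.1 p.2
      exact card_pos.2 ⟨t, by simpa using ht⟩
  _ = ∑ t, #(S t) * #(T t) := by
    simp only [sum_card_filter_comm, card_filter_mem_and_mem]

variable (good : ι → α → α → Prop) [∀ t x y, Decidable (good t x y)]

theorem sum_card_filter_not_le {ε : ℝ}
    (herr : ∀ x y, (1 - ε) * (#{t | x ∈ S t ∧ y ∈ T t} : ℝ) ≤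
      #{t | (x ∈ S t ∧ y ∈ T t) ∧ good t x y}) :
    ∑ t, (#{p ∈ S t ×ˢ T t | ¬ good t p.1 p.2} : ℝ) ≤ ε * ∑ t, (#(S t) * #(T t) : ℝ) := by
  have hpoint (p : α × α) : (#{t | (p.1 ∈ S t ∧ p.2 ∈ T t) ∧ ¬ good t p.1 p.2} : ℝ) ≤
      ε * #{t | p.1 ∈ S t ∧ p.2 ∈ T t} := by
    have hsplit := card_filter_add_card_filter_not (s := {t | p.1 ∈ S t ∧ p.2 ∈ T t})
      (fun t => good t p.1 p.2)
    rw [filter_filter, filter_filter] at hsplit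
    have hsplit' := congrArg (Nat.cast : ℕ → ℝ) hsplit
    push_cast at hsplit'
    linarith [herr p.1 p.2]
  have hbad := sum_card_filter_comm fun t (p : α × α) =>
    (p.1 ∈ S t ∧ p.2 ∈ T t) ∧ ¬ good t p.1 p.2
  have hcov := sum_card_filter_comm fun t (p : α × α) => p.1 ∈ S t ∧ p.2 ∈ T t
  simp only [card_filter_mem_and_mem] at hcov
  calc ∑ t, (#{p ∈ S t ×ˢ T t | ¬ good t p.1 p.2} : ℝ)
      = ∑ p : α × α, (#{t | (p.1 ∈ S t ∧ p.2 ∈ T t) ∧ ¬ good t p.1 p.2} : ℝ) := by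
        rw [← Nat.cast_sum, ← Nat.cast_sum, hbad]
        congr! 3 with t
        ext p
        simp
    _ ≤ ∑ p : α × α, ε * #{t | p.1 ∈ S t ∧ p.2 ∈ T t} := sum_le_sum fun p _ => hpoint p
    _ = ε * ∑ t, (#(S t) * #(T t) : ℝ) := by
        rw [← mul_sum]
        exact_mod_cast congrArg (ε * ·) (congrArg Nat.cast hcov)

theorem card_le_of_approxMajorityCover {ε δ D : ℝ} (hδ : 0 ≤ δ) (hεδ : ε ≤ δ) (hD : 0 ≤ D)
    (hcover : ∀ x y, ∃ t, x ∈ S t ∧ y ∈ T t)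
    (herr : ∀ x y, (1 - ε) * (#{t | x ∈ S t ∧ y ∈ T t} : ℝ) ≤
      #{t | (x ∈ S t ∧ y ∈ T t) ∧ good t x y})
    (hlarge : ∀ t, D ≤ #(S t) → D ≤ #(T t) →
      δ * (#(S t) * #(T t)) ≤ #{p ∈ S t ×ˢ T t | ¬ good t p.1 p.2}) :
    (δ - ε) * Fintype.card α ≤ δ * (Fintype.card ι * D) := by
  have hcard (s : Finset α) : (#s : ℝ) ≤ Fintype.card α := by exact_mod_cast card_le_univ s
  have htotal : (Fintype.card α : ℝ) ^ 2 ≤ ∑ t, (#(S t) * #(T t) : ℝ) := by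
    exact_mod_cast sq_card_le_sum_card_mul_card S T hcover
  set w : ι → ℝ := fun t => #(S t) * #(T t)
  set K : ℝ := (Fintype.card α : ℝ)
  have hK : 0 ≤ K := Nat.cast_nonneg _
  have hsplit := sum_filter_add_sum_filter_not univ (fun t => D ≤ #(S t) ∧ D ≤ #(T t)) w
  have hlarge_sum : δ * ∑ t with D ≤ #(S t) ∧ D ≤ #(T t), w t ≤ ε * ∑ t, w t := calc
    δ * ∑ t with D ≤ #(S t) ∧ D ≤ #(T t), w t
      ≤ ∑ t with D ≤ #(S t) ∧ D ≤ #(T t), (#{p ∈ S t ×ˢ T t | ¬ good t p.1 p.2} : ℝ) := by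
        rw [mul_sum]
        exact sum_le_sum fun t ht => hlarge t (mem_filter.1 ht).2.1 (mem_filter.1 ht).2.2
    _ ≤ ∑ t, (#{p ∈ S t ×ˢ T t | ¬ good t p.1 p.2} : ℝ) :=
        sum_le_sum_of_subset_of_nonneg (filter_subset _ _) fun _ _ _ => Nat.cast_nonneg _
    _ ≤ ε * ∑ t, w t := sum_card_filter_not_le S T good herr
  have hsmall_sum : ∑ t with ¬(D ≤ #(S t) ∧ D ≤ #(T t)), w t ≤ Fintype.card ι * (D * K) := by
    have hsmall : ∀ t ∈ ({t | ¬(D ≤ #(S t) ∧ D ≤ #(T t))} : Finset ι), w t ≤ D * K := by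
      intro t ht
      rcases not_and_or.1 (mem_filter.1 ht).2 with hS | hT
      · exact mul_le_mul (not_le.1 hS).le (hcard _) (Nat.cast_nonneg _) hD
      · rw [mul_comm D]
        exact mul_le_mul (hcard _) (not_le.1 hT).le (Nat.cast_nonneg _) hK
    calc ∑ t with ¬(D ≤ #(S t) ∧ D ≤ #(T t)), w t
        ≤ #({t | ¬(D ≤ #(S t) ∧ D ≤ #(T t))} : Finset ι) * (D * K) := by
          simpa using sum_le_card_nsmul _ _ _ hsmall
      _ ≤ Fintype.card ι * (D * K) := by
          gcongr
          exact_mod_cast card_le_univ _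
  have hbalance : (δ - ε) * ∑ t, w t ≤ δ * (Fintype.card ι * (D * K)) := by
    have := congrArg (δ * ·) hsplit
    simp only [mul_add] at this
    linarith [mul_le_mul_of_nonneg_left hsmall_sum hδ]
  have hsq : (δ - ε) * K * K ≤ δ * (Fintype.card ι * D) * K := by
    linarith [mul_le_mul_of_nonneg_left htotal (sub_nonneg.2 hεδ)]
  rcases hK.eq_or_lt with hK0 | hKpos
  · rw [← hK0, mul_zero]
    positivity
  · exact le_of_mul_le_mul_right hsq hKpos

end ApproxMajorityCover

section HeavyValues

variable {ι G : Type*} [Fintype ι] [Fintype G] [DecidableEq G]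

noncomputable def heavyValues (𝒳 : Finset (ι → G)) (θ : ℝ) : Finset G :=
  {v | θ * #𝒳 ≤ #{X ∈ 𝒳 | ∃ i, X i = v}}

theorem card_le_card_heavyValues_pow_add (𝒳 : Finset (ι → G)) (θ : ℝ) :
    (#𝒳 : ℝ) ≤ #(heavyValues 𝒳 θ) ^ Fintype.card ι + #(heavyValues 𝒳 θ)ᶜ * (θ * #𝒳) := by
  classical
  set H := heavyValues 𝒳 θ
  have hsplit := card_filter_add_card_filter_not (s := 𝒳) (fun X => ∀ i, X i ∈ H)
  have hin : #{X ∈ 𝒳 | ∀ i, X i ∈ H} ≤ #H ^ Fintype.card ι := calc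
    #{X ∈ 𝒳 | ∀ i, X i ∈ H} ≤ #(Fintype.piFinset fun _ : ι => H) :=
      card_le_card fun X hX => Fintype.mem_piFinset.2 (mem_filter.1 hX).2
    _ = #H ^ Fintype.card ι := by simp
  have hout : (#{X ∈ 𝒳 | ¬ ∀ i, X i ∈ H} : ℝ) ≤ #Hᶜ * (θ * #𝒳) := calc
    (#{X ∈ 𝒳 | ¬ ∀ i, X i ∈ H} : ℝ) ≤ #(Hᶜ.biUnion fun v => {X ∈ 𝒳 | ∃ i, X i = v}) := by
      gcongr
      intro X hX
      obtain ⟨hX𝒳, i, hi⟩ := by simpa only [mem_filter, not_forall] using hX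
      exact mem_biUnion.2 ⟨X i, mem_compl.2 hi, mem_filter.2 ⟨hX𝒳, i, rfl⟩⟩
    _ ≤ ∑ v ∈ Hᶜ, (#{X ∈ 𝒳 | ∃ i, X i = v} : ℝ) := by exact_mod_cast card_biUnion_le
    _ ≤ ∑ _v ∈ Hᶜ, θ * #𝒳 := sum_le_sum fun v hv =>
      (by simpa [H, heavyValues] using mem_compl.1 hv : _ < _).le
    _ = #Hᶜ * (θ * #𝒳) := by rw [sum_const, nsmul_eq_mul]
  have hsplit' := congrArg (Nat.cast : ℕ → ℝ) hsplit
  push_cast at hsplit'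
  have hin' : (#{X ∈ 𝒳 | ∀ i, X i ∈ H} : ℝ) ≤ #H ^ Fintype.card ι := by exact_mod_cast hin
  linarith

theorem card_lt_two_mul_card_heavyValues {𝒳 : Finset (ι → G)} {θ : ℝ} (hθ : 0 ≤ θ)
    (hθG : Fintype.card G * θ ≤ 1 / 2)
    (h𝒳 : 2 * ((Fintype.card G : ℝ) / 2) ^ Fintype.card ι < #𝒳) :
    Fintype.card G < 2 * #(heavyValues 𝒳 θ) := by
  by_contra! hH
  have hpow : (#(heavyValues 𝒳 θ) : ℝ) ^ Fintype.card ι ≤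
      ((Fintype.card G : ℝ) / 2) ^ Fintype.card ι := by
    gcongr
    rw [le_div_iff₀ two_pos]
    exact_mod_cast (mul_comm _ _).le.trans hH
  have hcompl : (#(heavyValues 𝒳 θ)ᶜ : ℝ) * θ ≤ 1 / 2 :=
    le_trans (mul_le_mul_of_nonneg_right (by exact_mod_cast card_le_univ _) hθ) hθG
  have := card_le_card_heavyValues_pow_add 𝒳 θ
  nlinarith [(Nat.cast_nonneg #𝒳 : (0 : ℝ) ≤ #𝒳)]

theorem exists_eq_add_of_card_lt_card_add_card {P Q : Finset G} [AddGroup G] (s : G)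
    (h : Fintype.card G < #P + #Q) : ∃ v ∈ P, ∃ w ∈ Q, s = v + w := by
  have hQ : #(Q.image fun w => s - w) = #Q := card_image_of_injective _ sub_right_injective
  obtain ⟨v, hv⟩ := inter_nonempty_of_card_lt_card_add_card (subset_univ P) (subset_univ _)
    (by rwa [hQ, card_univ])
  obtain ⟨hvP, hvQ⟩ := mem_inter.1 hv
  obtain ⟨w, hwQ, rfl⟩ := mem_image.1 hvQ
  exact ⟨s - w, hvP, w, hwQ, (sub_add_cancel s w).symm⟩

theorem sq_mul_card_mul_card_le_card_filter_exists_eq_add [AddGroup G] {S T : Finset (ι → G)}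
    {θ : ℝ} (s : G) (hθ : 0 ≤ θ)
    (h : Fintype.card G < #(heavyValues S θ) + #(heavyValues T θ)) :
    θ ^ 2 * (#S * #T) ≤ #{p ∈ S ×ˢ T | ∃ i j, s = p.1 i + p.2 j} := by
  obtain ⟨v, hv, w, hw, hs⟩ := exists_eq_add_of_card_lt_card_add_card s h
  have hsub : {X ∈ S | ∃ i, X i = v} ×ˢ {Y ∈ T | ∃ j, Y j = w} ⊆
      {p ∈ S ×ˢ T | ∃ i j, s = p.1 i + p.2 j} := by
    intro p hp
    simp only [mem_product, mem_filter] at hp ⊢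
    obtain ⟨⟨hX, i, rfl⟩, hY, j, rfl⟩ := hp
    exact ⟨⟨hX, hY⟩, i, j, hs⟩
  have hvS : θ * #S ≤ #{X ∈ S | ∃ i, X i = v} := by simpa [heavyValues] using hv
  have hwT : θ * #T ≤ #{Y ∈ T | ∃ j, Y j = w} := by simpa [heavyValues] using hw
  calc θ ^ 2 * (#S * #T) = (θ * #S) * (θ * #T) := by ring
    _ ≤ #{X ∈ S | ∃ i, X i = v} * #{Y ∈ T | ∃ j, Y j = w} := by gcongr
    _ ≤ #{p ∈ S ×ˢ T | ∃ i j, s = p.1 i + p.2 j} := by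
      rw [← Nat.cast_mul, ← card_product]
      exact_mod_cast card_le_card hsub

theorem inv_pow_four_mul_card_mul_card_le_card_filter_exists_eq_add [AddGroup G]
    {S T : Finset (ι → G)} (s : G) (hG : 2 ≤ Fintype.card G)
    (hS : 4 * ((Fintype.card G : ℝ) / 2) ^ Fintype.card ι ≤ #S)
    (hT : 4 * ((Fintype.card G : ℝ) / 2) ^ Fintype.card ι ≤ #T) :
    ((Fintype.card G : ℝ) ^ 4)⁻¹ * (#S * #T) ≤ #{p ∈ S ×ˢ T | ∃ i j, s = p.1 i + p.2 j} := by
  have hq : (2 : ℝ) ≤ Fintype.card G := by exact_mod_cast hG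
  set q : ℝ := (Fintype.card G : ℝ)
  have hθ : q * (q ^ 2)⁻¹ ≤ 1 / 2 := by
    rw [sq, mul_inv, ← mul_assoc, mul_inv_cancel₀ (by positivity), one_mul, one_div]
    exact inv_anti₀ two_pos hq
  have hpos : 0 < (q / 2) ^ Fintype.card ι := by positivity
  have hS' := card_lt_two_mul_card_heavyValues (by positivity) hθ (by linarith : _ < (#S : ℝ))
  have hT' := card_lt_two_mul_card_heavyValues (by positivity) hθ (by linarith : _ < (#T : ℝ))
  calc (q ^ 4)⁻¹ * (#S * #T) = ((q ^ 2)⁻¹) ^ 2 * (#S * #T) := by ring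
    _ ≤ _ := sq_mul_card_mul_card_le_card_filter_exists_eq_add s (by positivity) (by omega)

end HeavyValues

theorem two_pow_le_eight_mul_of_le {q : ℝ} {m N : ℕ} (hq : 2 ≤ q)
    (h : ((q ^ 4)⁻¹ - (q ^ 5)⁻¹) * q ^ m ≤ (q ^ 4)⁻¹ * (N * (4 * (q / 2) ^ m))) :
    (2 : ℝ) ^ m ≤ 8 * N := by
  have hq0 : 0 < q := by linarith
  have hqm : 0 < q ^ m := by positivity
  have h2m : (0 : ℝ) < 2 ^ m := by positivity
  rw [div_pow] at h
  field_simp at h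
  nlinarith [mul_pos hqm h2m]

theorem two_rpow_half_lt_of_two_pow_le {m N : ℕ} (hm : 8 ≤ m) (h : (2 : ℝ) ^ m ≤ 8 * N) :
    (2 : ℝ) ^ ((m : ℝ) / 2) < N := by
  set r : ℝ := (2 : ℝ) ^ ((m : ℝ) / 2)
  have hr : r * r = 2 ^ m := by
    rw [← Real.rpow_add two_pos, add_halves, Real.rpow_natCast]
  have hr8 : 8 < r := calc
    (8 : ℝ) < 2 ^ (4 : ℝ) := by norm_num
    _ ≤ r := Real.rpow_le_rpow_of_exponent_le one_le_two (by
        have : (8 : ℝ) ≤ m := by exact_mod_cast hm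
        linarith)
  nlinarith

theorem stmt5_general (n m : ℕ) (hn : 1 ≤ n) (hm : 20 * n ≤ m)
    (N : ℕ)
    (A : Fin N → (Finset (Fin m → Fin n → Bool) × Finset (Fin m → Fin n → Bool)) ×
      (Fin n → Bool))
    (hcover : ∀ X Y : Fin m → Fin n → Bool, ∃ t : Fin N, X ∈ (A t).1.1 ∧ Y ∈ (A t).1.2)
    (herr : ∀ X Y : Fin m → Fin n → Bool,
      (1 - ((2 : ℝ) ^ (5 * n))⁻¹) *
          ((Finset.univ.filter (fun t : Fin N => X ∈ (A t).1.1 ∧ Y ∈ (A t).1.2)).card : ℝ) ≤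
        ((Finset.univ.filter (fun t : Fin N => (X ∈ (A t).1.1 ∧ Y ∈ (A t).1.2) ∧
            ∀ i j : Fin m, (A t).2 ≠ fun u => Bool.xor (X i u) (Y j u))).card : ℝ)) :
    (2 : ℝ) ^ ((m : ℝ) / 2) < (N : ℝ) := by
  have hG : Fintype.card (Fin n → Bool) = 2 ^ n := by simp
  have h2n : 2 ≤ 2 ^ n := le_self_pow₀ one_le_two (by omega)
  have key := card_le_of_approxMajorityCover (fun t => (A t).1.1) (fun t => (A t).1.2)
    (fun t X Y => ∀ i j : Fin m, (A t).2 ≠ fun u => Bool.xor (X i u) (Y j u))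
    (δ := ((Fintype.card (Fin n → Bool) : ℝ) ^ 4)⁻¹)
    (D := 4 * ((Fintype.card (Fin n → Bool) : ℝ) / 2) ^ m) (by positivity) ?_ (by positivity)
    hcover herr fun t hS hT => ?_
  · refine two_rpow_half_lt_of_two_pow_le (by omega)
      (two_pow_le_eight_mul_of_le (by exact_mod_cast h2n : (2 : ℝ) ≤ 2 ^ n) ?_)
    simpa [hG, pow_mul'] using key
  · rw [hG, Nat.cast_pow, Nat.cast_two, ← pow_mul]
    exact inv_anti₀ (by positivity) (pow_le_pow_right₀ one_le_two (by omega))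
  · convert inv_pow_four_mul_card_mul_card_le_card_filter_exists_eq_add (S := (A t).1.1)
      (T := (A t).1.2) (A t).2 (hG ▸ h2n) (by rwa [Fintype.card_fin])
      (by rwa [Fintype.card_fin]) using 4
    simp only [not_forall, not_not]
    -- addition on `Bool` is `xor`
    rfl

/-- Any approximate majority cover (a finite family of labeled rectangles, indexed by `Fin N`)
that solves `XOR-Missing-String(n,m)` with error at most `2^{-5n}` has size greater than
`2^{m/2}`.  Here a labeled rectangle is a pair of Finsets (Alice's side and Bob's side) together
with an `n`-bit label; the cover solves the problem with error `ε` if every instance is covered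
and, among the rectangles containing a given instance, at least a `(1-ε)` fraction carry a label
that is a solution (i.e. differs from every `X i ⊕ Y j`). -/
theorem stmt5 (n m : ℕ) (hn : 1 ≤ n) (hm : 20 * n ≤ m)
    (hm2 : (m : ℝ) < (2 : ℝ) ^ ((n : ℝ) / 2))
    (N : ℕ)
    (A : Fin N → (Finset (Fin m → Fin n → Bool) × Finset (Fin m → Fin n → Bool)) ×
      (Fin n → Bool))
    (hcover : ∀ X Y : Fin m → Fin n → Bool, ∃ t : Fin N, X ∈ (A t).1.1 ∧ Y ∈ (A t).1.2)
    (herr : ∀ X Y : Fin m → Fin n → Bool,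
      (1 - ((2 : ℝ) ^ (5 * n))⁻¹) *
          ((Finset.univ.filter (fun t : Fin N => X ∈ (A t).1.1 ∧ Y ∈ (A t).1.2)).card : ℝ) ≤
        ((Finset.univ.filter (fun t : Fin N => (X ∈ (A t).1.1 ∧ Y ∈ (A t).1.2) ∧
            ∀ i j : Fin m, (A t).2 ≠ fun u => Bool.xor (X i u) (Y j u))).card : ℝ)) :
    (2 : ℝ) ^ ((m : ℝ) / 2) < (N : ℝ) :=
  stmt5_general n m hn hm N A hcover herr
end

section
/- Let n ≥ 1, k ≥ 1, and 20nk ≤ m < 2^{n/2} be integers. Every PostBPP list-solver with list size k that list-solves XOR-Missing-String(n,m) with error at most 2^{−5nk} has communication complexity at least m/4. -/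
/-!
Fix a list `L` of `k` strings and a rectangle `A × B` whose sides both have density at least
`2^{-m/3}`. Call `v` heavy for `A` if some coordinate `X i` equals `v` on at least a `2^{-2n}`
fraction of `A`. Since `2m ≤ 2^n`, at least half of `A` has only heavy coordinates, and as `A`
is large this forces more than half of all strings to be heavy for `A`. Hence, for any string
`s`, some `v` heavy for `A` (at `i`) and `w` heavy for `B` (at `j`) satisfy `s = v ⊕ w`;
restricting to `X i = v` and `Y j = w` makes `s = X i ⊕ Y j` on a subrectangle of relative
size `2^{-4n}`. Iterating over the strings of `L` (the sides stay large enough because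
`m ≥ 20nk`) shows that `L` contains no solution on a `2^{-4nk}` fraction of `A × B`. So every
labeled rectangle is small or `2^{-4nk}`-corrupted, and summing over the `2^c` rectangles of
each of the `2^{k'}` protocols against the error bound `2^{-5nk}` gives `2^{m/3} ≤ 2^{k'+c+1}`.
-/

/-- A deterministic communication protocol of complexity `c` on input space `I × I` with
outputs in `L`: the function `f` is computed by at most `2 ^ c` pairwise disjoint labeled
rectangles covering the input space. -/
def IsDetProtocol {I L : Type} (c : ℕ) (f : I → I → L) : Prop :=
  ∃ (N : ℕ) (Rx Ry : Fin N → Finset I) (lab : Fin N → L),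
    N ≤ 2 ^ c ∧
    (∀ x y : I, ∃! t : Fin N, x ∈ Rx t ∧ y ∈ Ry t) ∧
    (∀ x y : I, ∀ t : Fin N, x ∈ Rx t → y ∈ Ry t → f x y = lab t)

open Finset

section Protocol

variable {I β : Type} (good : I → I → β → Prop) [∀ x y b, Decidable (good x y b)]

lemma card_filter_success_product_le {f : I → I → Option β} {A B : Finset I} {o : Option β}
    (hf : ∀ x ∈ A, ∀ y ∈ B, f x y = o) {δ S : ℝ} (hδ : 0 ≤ δ) (hS : 0 ≤ S)
    (hcorr : ∀ b, (#A * #B : ℝ) ≤ S ∨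
      δ * (#A * #B) ≤ #((A ×ˢ B).filter fun p => ¬ good p.1 p.2 b)) :
    (#((A ×ˢ B).filter fun p => ∃ b, f p.1 p.2 = some b ∧ good p.1 p.2 b) : ℝ) ≤
      (1 - δ) * #((A ×ˢ B).filter fun p => f p.1 p.2 ≠ none) + δ * S := by
  have hfo : ∀ p ∈ A ×ˢ B, f p.1 p.2 = o := fun p hp =>
    hf _ (mem_product.1 hp).1 _ (mem_product.1 hp).2
  cases o with
  | none =>
    have hsucc : (A ×ˢ B).filter (fun p => ∃ b, f p.1 p.2 = some b ∧ good p.1 p.2 b) = ∅ :=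
      filter_false_of_mem fun p hp => by simp [hfo p hp]
    rw [hsucc, card_empty, Nat.cast_zero]
    have hacc : (A ×ˢ B).filter (fun p => f p.1 p.2 ≠ none) = ∅ :=
      filter_false_of_mem fun p hp => by simp [hfo p hp]
    rw [hacc, card_empty, Nat.cast_zero, mul_zero, zero_add]
    positivity
  | some b =>
    have hacc : (A ×ˢ B).filter (fun p => f p.1 p.2 ≠ none) = A ×ˢ B :=
      filter_true_of_mem fun p hp => by simp [hfo p hp]
    have hsucc : (A ×ˢ B).filter (fun p => ∃ b, f p.1 p.2 = some b ∧ good p.1 p.2 b) =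
        (A ×ˢ B).filter fun p => good p.1 p.2 b :=
      filter_congr fun p hp => by simp [hfo p hp]
    have hsplit : (#((A ×ˢ B).filter fun p => good p.1 p.2 b) : ℝ) +
        #((A ×ˢ B).filter fun p => ¬ good p.1 p.2 b) = #A * #B := by
      exact_mod_cast (card_filter_add_card_filter_not _).trans (card_product A B)
    rw [hacc, hsucc, card_product, Nat.cast_mul]
    rcases hcorr b with hsmall | hcorrupt
    · nlinarith [mul_le_mul_of_nonneg_left hsmall hδ]
    · nlinarith [mul_nonneg hδ hS]

variable [Fintype I]

lemma card_filter_eq_sum_card_filter_of_partition {N : ℕ} {Rx Ry : Fin N → Finset I}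
    (hpart : ∀ x y : I, ∃! t, x ∈ Rx t ∧ y ∈ Ry t) (P : I × I → Prop)
    [DecidablePred P] :
    #(univ.filter P) = ∑ t, #((Rx t ×ˢ Ry t).filter P) := by
  choose t ht using fun p : I × I => (hpart p.1 p.2).exists
  rw [card_eq_sum_card_fiberwise (f := t) (t := univ) fun _ _ => mem_coe.2 (mem_univ _)]
  refine sum_congr rfl fun s _ => congrArg card ?_
  ext p
  simp only [mem_filter, mem_univ, true_and, mem_product]
  constructor
  · rintro ⟨hp, rfl⟩
    exact ⟨ht p, hp⟩
  · rintro ⟨hs, hp⟩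
    exact ⟨hp, (hpart p.1 p.2).unique (ht p) hs⟩

lemma sum_card_filter_comm_s7 {γ : Type} [Fintype γ] (P : I → γ → Prop)
    [∀ a b, Decidable (P a b)] :
    ∑ a, #(univ.filter (P a)) = ∑ b, #(univ.filter fun a => P a b) :=
  sum_card_bipartiteAbove_eq_sum_card_bipartiteBelow P

theorem IsDetProtocol.card_success_le {c : ℕ} {f : I → I → Option β} (hf : IsDetProtocol c f)
    {δ S : ℝ} (hδ : 0 ≤ δ) (hS : 0 ≤ S)
    (hcorr : ∀ (A B : Finset I) (b : β), (#A * #B : ℝ) ≤ S ∨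
      δ * (#A * #B) ≤ #((A ×ˢ B).filter fun p => ¬ good p.1 p.2 b)) :
    (#(univ.filter fun p : I × I => ∃ b, f p.1 p.2 = some b ∧ good p.1 p.2 b) : ℝ) ≤
      (1 - δ) * #(univ.filter fun p : I × I => f p.1 p.2 ≠ none) + 2 ^ c * (δ * S) := by
  obtain ⟨N, Rx, Ry, lab, hN, hpart, hlab⟩ := hf
  rw [card_filter_eq_sum_card_filter_of_partition hpart,
    card_filter_eq_sum_card_filter_of_partition hpart]
  push_cast
  calc _ ≤ ∑ t, ((1 - δ) * #((Rx t ×ˢ Ry t).filter fun p => f p.1 p.2 ≠ none) + δ * S) :=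
        sum_le_sum fun t _ => card_filter_success_product_le good
          (fun x hx y hy => hlab x y t hx hy) hδ hS (hcorr _ _)
    _ = (1 - δ) * ∑ t, (#((Rx t ×ˢ Ry t).filter fun p => f p.1 p.2 ≠ none) : ℝ) +
          N * (δ * S) := by
        rw [sum_add_distrib, ← mul_sum, sum_const, card_univ, Fintype.card_fin, nsmul_eq_mul]
    _ ≤ _ := by gcongr; exact_mod_cast hN

theorem sq_card_le_of_postBPP_of_corrupted {k' c : ℕ}
    (Prot : Fin (2 ^ k') → I → I → Option β)
    (hdet : ∀ r, IsDetProtocol c (Prot r)) {ε δ S : ℝ}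
    (hcorr : ∀ (A B : Finset I) (b : β), (#A * #B : ℝ) ≤ S ∨
      δ * (#A * #B) ≤ #((A ×ˢ B).filter fun p => ¬ good p.1 p.2 b))
    (hδ : 0 < δ) (hS : 0 ≤ S) (hεδ : ε ≤ δ / 2)
    (hsolve : ∀ x y, (∃ r, Prot r x y ≠ none) ∧
      (1 - ε) * (#(univ.filter fun r => Prot r x y ≠ none) : ℝ) ≤
        #(univ.filter fun r => ∃ b, Prot r x y = some b ∧ good x y b)) :
    (Fintype.card I : ℝ) ^ 2 ≤ 2 ^ (k' + c + 1) * S := by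
  have hswapT : ∑ p : I × I, #(univ.filter fun r => Prot r p.1 p.2 ≠ none) =
      ∑ r, #(univ.filter fun p : I × I => Prot r p.1 p.2 ≠ none) :=
    sum_card_filter_comm_s7 _
  have hswapG :
      ∑ p : I × I, #(univ.filter fun r => ∃ b, Prot r p.1 p.2 = some b ∧ good p.1 p.2 b) =
        ∑ r, #(univ.filter fun p : I × I => ∃ b, Prot r p.1 p.2 = some b ∧ good p.1 p.2 b) :=
    sum_card_filter_comm_s7 _
  set T : ℝ := ∑ r, #(univ.filter fun p : I × I => Prot r p.1 p.2 ≠ none) with hT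
  set G : ℝ :=
    ∑ r, #(univ.filter fun p : I × I => ∃ b, Prot r p.1 p.2 = some b ∧ good p.1 p.2 b)
    with hG
  have hTG : (1 - ε) * T ≤ G := by
    rw [hT, hG, ← Nat.cast_sum, ← Nat.cast_sum, ← hswapT, ← hswapG, Nat.cast_sum,
      Nat.cast_sum, mul_sum]
    exact sum_le_sum fun p _ => (hsolve p.1 p.2).2
  have hGT : G ≤ (1 - δ) * T + 2 ^ k' * (2 ^ c * (δ * S)) := by
    calc G ≤ ∑ r : Fin (2 ^ k'), ((1 - δ) *
            #(univ.filter fun p : I × I => Prot r p.1 p.2 ≠ none) + 2 ^ c * (δ * S)) :=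
          sum_le_sum fun r _ => (hdet r).card_success_le good hδ.le hS hcorr
      _ = _ := by
          rw [sum_add_distrib, ← mul_sum, sum_const, card_univ, Fintype.card_fin, nsmul_eq_mul]
          push_cast
          rfl
  have hcardT : (Fintype.card I : ℝ) ^ 2 ≤ T := by
    rw [hT, ← Nat.cast_sum, ← hswapT]
    norm_cast
    rw [sq, ← Fintype.card_prod, ← card_univ, card_eq_sum_ones]
    refine sum_le_sum fun p _ => card_pos.2 ?_
    obtain ⟨r, hr⟩ := (hsolve p.1 p.2).1
    exact ⟨r, mem_filter.2 ⟨mem_univ r, hr⟩⟩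
  have hhalf : δ / 2 * (Fintype.card I : ℝ) ^ 2 ≤ δ / 2 * (2 ^ (k' + c + 1) * S) :=
    calc δ / 2 * (Fintype.card I : ℝ) ^ 2 ≤ (δ - ε) * T :=
          mul_le_mul (by linarith) hcardT (sq_nonneg _) (by linarith)
      _ ≤ 2 ^ k' * (2 ^ c * (δ * S)) := by linarith
      _ = _ := by ring
  exact le_of_mul_le_mul_left hhalf (by positivity)

end Protocol

section Heavy

variable {α : Type} [Fintype α] [DecidableEq α] {m : ℕ}

def IsHeavy (A : Finset (Fin m → α)) (v : α) : Prop :=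
  ∃ i, #A ≤ Fintype.card α ^ 2 * #(A.filter fun X => X i = v)

instance (A : Finset (Fin m → α)) : DecidablePred (IsHeavy A) := fun v =>
  inferInstanceAs (Decidable (∃ i, #A ≤ Fintype.card α ^ 2 * #(A.filter fun X => X i = v)))

lemma sq_card_mul_card_filter_not_isHeavy_le (A : Finset (Fin m → α)) (i : Fin m) :
    Fintype.card α ^ 2 * #(A.filter fun X => ¬ IsHeavy A (X i)) ≤ Fintype.card α * #A := by
  rw [card_eq_sum_card_fiberwise (f := fun X => X i) (t := univ.filter fun v => ¬ IsHeavy A v)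
    fun X hX => by simpa using (mem_filter.1 hX).2, mul_sum]
  calc _ ≤ ∑ _v ∈ univ.filter fun v => ¬ IsHeavy A v, #A :=
      sum_le_sum fun v hv => by
        have hlight : ¬ #A ≤ Fintype.card α ^ 2 * #(A.filter fun X => X i = v) := fun h =>
          (mem_filter.1 hv).2 ⟨i, h⟩
        refine (Nat.mul_le_mul_left _ (card_le_card ?_)).trans (not_le.1 hlight).le
        exact filter_subset_filter _ (filter_subset _ _)
    _ ≤ Fintype.card α * #A := by
        rw [sum_const, smul_eq_mul]
        exact Nat.mul_le_mul_right _ (card_le_univ _)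

lemma two_mul_card_filter_exists_not_isHeavy_le (hm : 2 * m ≤ Fintype.card α)
    (A : Finset (Fin m → α)) :
    2 * #(A.filter fun X => ∃ i, ¬ IsHeavy A (X i)) ≤ #A := by
  rcases (A.filter fun X => ∃ i, ¬ IsHeavy A (X i)).eq_empty_or_nonempty
    with hempty | ⟨X, hX⟩
  · simp [hempty]
  have hα : 0 < Fintype.card α :=
    Fintype.card_pos_iff.2 ⟨X (mem_filter.1 hX).2.choose⟩
  have hbad : A.filter (fun X => ∃ i, ¬ IsHeavy A (X i)) ⊆
      univ.biUnion fun i => A.filter fun X => ¬ IsHeavy A (X i) := fun X hX => by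
    obtain ⟨hXA, i, hi⟩ := mem_filter.1 hX
    exact mem_biUnion.2 ⟨i, mem_univ i, mem_filter.2 ⟨hXA, hi⟩⟩
  refine Nat.le_of_mul_le_mul_left ?_ (pow_pos hα 2)
  calc Fintype.card α ^ 2 * (2 * #(A.filter fun X => ∃ i, ¬ IsHeavy A (X i)))
      ≤ 2 * ∑ i, Fintype.card α ^ 2 * #(A.filter fun X => ¬ IsHeavy A (X i)) := by
        rw [mul_left_comm, ← mul_sum]
        gcongr
        exact (card_le_card hbad).trans card_biUnion_le
    _ ≤ 2 * ∑ _i : Fin m, Fintype.card α * #A :=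
        Nat.mul_le_mul_left _
          (sum_le_sum fun i _ => sq_card_mul_card_filter_not_isHeavy_le A i)
    _ = 2 * m * (Fintype.card α * #A) := by
        rw [sum_const, card_univ, Fintype.card_fin, smul_eq_mul, mul_assoc]
    _ ≤ Fintype.card α * (Fintype.card α * #A) := Nat.mul_le_mul_right _ hm
    _ = Fintype.card α ^ 2 * #A := by ring

lemma card_le_two_mul_card_isHeavy_pow (hm : 2 * m ≤ Fintype.card α)
    (A : Finset (Fin m → α)) :
    #A ≤ 2 * #(univ.filter (IsHeavy A)) ^ m := by
  have hcover : A ⊆ A.filter (fun X => ∃ i, ¬ IsHeavy A (X i)) ∪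
      Fintype.piFinset fun _ => univ.filter (IsHeavy A) := fun X hX => by
    by_cases h : ∃ i, ¬ IsHeavy A (X i)
    · exact mem_union_left _ (mem_filter.2 ⟨hX, h⟩)
    · exact mem_union_right _ (Fintype.mem_piFinset.2 fun i =>
        mem_filter.2 ⟨mem_univ _, not_exists_not.1 h i⟩)
  have hunion := (card_le_card hcover).trans (card_union_le _ _)
  rw [Fintype.card_piFinset_const] at hunion
  have hlight := two_mul_card_filter_exists_not_isHeavy_le hm A
  omega

theorem card_lt_two_mul_card_isHeavy {a : ℕ} (hm : 2 * m ≤ Fintype.card α) (ham : a + 2 ≤ m)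
    (A : Finset (Fin m → α)) (hA : Fintype.card (Fin m → α) ≤ 2 ^ a * #A) :
    Fintype.card α < 2 * #(univ.filter (IsHeavy A)) := by
  by_contra! hlight
  rw [Fintype.card_fun, Fintype.card_fin] at hA
  have hApos : 0 < #A :=
    Nat.pos_of_mul_pos_left ((pow_pos (by omega : 0 < Fintype.card α) m).trans_le hA)
  have hpow : 2 ^ m * #A ≤ 2 ^ (a + 1) * #A :=
    calc 2 ^ m * #A ≤ 2 ^ m * (2 * #(univ.filter (IsHeavy A)) ^ m) :=
          Nat.mul_le_mul_left _ (card_le_two_mul_card_isHeavy_pow hm A)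
      _ = 2 * (2 * #(univ.filter (IsHeavy A))) ^ m := by ring
      _ ≤ 2 * Fintype.card α ^ m := by gcongr
      _ ≤ 2 ^ (a + 1) * #A := by rw [pow_succ]; linarith
  have hexp : m ≤ a + 1 :=
    (Nat.pow_le_pow_iff_right one_lt_two).1 (Nat.le_of_mul_le_mul_right hpow hApos)
  omega

end Heavy

section XorMissingString

variable {n m : ℕ}

def IsSolution (X Y : Fin m → Fin n → Bool) (s : Fin n → Bool) : Prop :=
  ∀ i j, s ≠ fun u => Bool.xor (X i u) (Y j u)

instance (X Y : Fin m → Fin n → Bool) : DecidablePred (IsSolution X Y) := fun s =>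
  inferInstanceAs (Decidable (∀ i j, s ≠ fun u => Bool.xor (X i u) (Y j u)))

def ContainsSolution {k : ℕ} (X Y : Fin m → Fin n → Bool) (L : Fin k → Fin n → Bool) :
    Prop :=
  ∃ l, IsSolution X Y (L l)

instance {k : ℕ} (X Y : Fin m → Fin n → Bool) :
    DecidablePred (ContainsSolution (k := k) X Y) :=
  fun L => inferInstanceAs (Decidable (∃ l, IsSolution X Y (L l)))

lemma exists_heavy_fibers_xor_eq {a : ℕ} (hmn : 2 * m ≤ 2 ^ n) (ham : a + 2 ≤ m)
    {A B : Finset (Fin m → Fin n → Bool)}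
    (hA : Fintype.card (Fin m → Fin n → Bool) ≤ 2 ^ a * #A)
    (hB : Fintype.card (Fin m → Fin n → Bool) ≤ 2 ^ a * #B) (s : Fin n → Bool) :
    ∃ i j v w, (s = fun u => Bool.xor (v u) (w u)) ∧
      #A ≤ 2 ^ (2 * n) * #(A.filter fun X => X i = v) ∧
      #B ≤ 2 ^ (2 * n) * #(B.filter fun Y => Y j = w) := by
  have hcard : Fintype.card (Fin n → Bool) = 2 ^ n := by simp
  have hsq : Fintype.card (Fin n → Bool) ^ 2 = 2 ^ (2 * n) := by
    rw [hcard, ← pow_mul, mul_comm]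
  have hHA := card_lt_two_mul_card_isHeavy (hcard ▸ hmn) ham A hA
  have hHB := card_lt_two_mul_card_isHeavy (hcard ▸ hmn) ham B hB
  let g : (Fin n → Bool) → Fin n → Bool := fun w u => Bool.xor (s u) (w u)
  have hg : g.Injective := fun w w' h => funext fun u => by simpa [g] using congrFun h u
  obtain ⟨v, hv⟩ := inter_nonempty_of_card_lt_card_add_card
    (subset_univ (univ.filter (IsHeavy A))) (subset_univ ((univ.filter (IsHeavy B)).image g))
    (by rw [card_image_of_injective _ hg, card_univ]; omega)
  obtain ⟨hvA, hvB⟩ := mem_inter.1 hv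
  obtain ⟨w, hwB, rfl⟩ := mem_image.1 hvB
  obtain ⟨i, hi⟩ := (mem_filter.1 hvA).2
  obtain ⟨j, hj⟩ := (mem_filter.1 hwB).2
  refine ⟨i, j, g w, w, funext fun u => by simp [g], hsq ▸ hi, hsq ▸ hj⟩

lemma exists_subsets_forall_not_isSolution {a : ℕ} (hmn : 2 * m ≤ 2 ^ n)
    {A B : Finset (Fin m → Fin n → Bool)}
    (hA : Fintype.card (Fin m → Fin n → Bool) ≤ 2 ^ a * #A)
    (hB : Fintype.card (Fin m → Fin n → Bool) ≤ 2 ^ a * #B)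
    (S : Finset (Fin n → Bool)) (hS : a + 2 * n * #S + 2 ≤ m) :
    ∃ A' ⊆ A, ∃ B' ⊆ B, #A ≤ 2 ^ (2 * n * #S) * #A' ∧ #B ≤ 2 ^ (2 * n * #S) * #B' ∧
      ∀ X ∈ A', ∀ Y ∈ B', ∀ s ∈ S, ¬ IsSolution X Y s := by
  induction S using Finset.induction_on with
  | empty => exact ⟨A, subset_rfl, B, subset_rfl, by simp, by simp, by simp⟩
  | insert s S hs ih =>
    rw [card_insert_of_notMem hs] at hS ⊢
    have hloss : 2 * n * #S ≤ 2 * n * (#S + 1) := Nat.mul_le_mul_left _ (Nat.le_succ _)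
    obtain ⟨A₁, hA₁, B₁, hB₁, hcA, hcB, hsol⟩ := ih (by omega)
    have hlarge : ∀ {C C₁ : Finset (Fin m → Fin n → Bool)},
        Fintype.card (Fin m → Fin n → Bool) ≤ 2 ^ a * #C →
        #C ≤ 2 ^ (2 * n * #S) * #C₁ →
        Fintype.card (Fin m → Fin n → Bool) ≤ 2 ^ (a + 2 * n * #S) * #C₁ := fun h h₁ =>
      h.trans (by rw [pow_add, mul_assoc]; exact Nat.mul_le_mul_left _ h₁)
    have hshrink : ∀ {C C₁ C₂ : Finset (Fin m → Fin n → Bool)},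
        #C ≤ 2 ^ (2 * n * #S) * #C₁ → #C₁ ≤ 2 ^ (2 * n) * #C₂ →
        #C ≤ 2 ^ (2 * n * (#S + 1)) * #C₂ := fun h h₁ =>
      h.trans ((Nat.mul_le_mul_left _ h₁).trans_eq (by ring))
    obtain ⟨i, j, v, w, hsvw, hi, hj⟩ :=
      exists_heavy_fibers_xor_eq hmn (by omega) (hlarge hA hcA) (hlarge hB hcB) s
    refine ⟨A₁.filter (· i = v), (filter_subset _ _).trans hA₁,
      B₁.filter (· j = w), (filter_subset _ _).trans hB₁, hshrink hcA hi, hshrink hcB hj, ?_⟩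
    intro X hX Y hY s' hs'
    rcases mem_insert.1 hs' with rfl | hs'
    · exact fun hsol => hsol i j (by rw [hsvw, (mem_filter.1 hX).2, (mem_filter.1 hY).2])
    · exact hsol X (mem_of_mem_filter _ hX) Y (mem_of_mem_filter _ hY) s' hs'

lemma card_mul_card_le_card_filter_not_containsSolution {q k : ℕ} (hmn : 2 * m ≤ 2 ^ n)
    (hm : q + 2 * n * k + 2 ≤ m) {A B : Finset (Fin m → Fin n → Bool)}
    (hA : Fintype.card (Fin m → Fin n → Bool) ≤ 2 ^ q * #A)
    (hB : Fintype.card (Fin m → Fin n → Bool) ≤ 2 ^ q * #B) (L : Fin k → Fin n → Bool) :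
    #A * #B ≤ 2 ^ (4 * n * k) * #((A ×ˢ B).filter fun p => ¬ ContainsSolution p.1 p.2 L) := by
  have hL : #(univ.image L) ≤ k := card_image_le.trans (by simp)
  have hloss : 2 * n * #(univ.image L) ≤ 2 * n * k := Nat.mul_le_mul_left _ hL
  obtain ⟨A', hA', B', hB', hcA, hcB, hsol⟩ :=
    exists_subsets_forall_not_isSolution hmn hA hB (univ.image L) (by omega)
  have hsub : A' ×ˢ B' ⊆ (A ×ˢ B).filter fun p => ¬ ContainsSolution p.1 p.2 L :=
    fun p hp => by
      obtain ⟨hpA, hpB⟩ := mem_product.1 hp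
      exact mem_filter.2 ⟨mem_product.2 ⟨hA' hpA, hB' hpB⟩, fun ⟨l, hl⟩ =>
        hsol _ hpA _ hpB _ (mem_image_of_mem L (mem_univ l)) hl⟩
  calc #A * #B ≤ (2 ^ (2 * n * k) * #A') * (2 ^ (2 * n * k) * #B') := by
        gcongr
        · exact hcA.trans (by gcongr; norm_num)
        · exact hcB.trans (by gcongr; norm_num)
    _ = 2 ^ (4 * n * k) * #(A' ×ˢ B') := by rw [card_product]; ring
    _ ≤ _ := Nat.mul_le_mul_left _ (card_le_card hsub)

lemma card_mul_card_le_or_le_card_filter_not_containsSolution {q k : ℕ}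
    (hmn : 2 * m ≤ 2 ^ n) (hm : q + 2 * n * k + 2 ≤ m) (A B : Finset (Fin m → Fin n → Bool))
    (L : Fin k → Fin n → Bool) :
    (#A * #B : ℝ) ≤ Fintype.card (Fin m → Fin n → Bool) ^ 2 / 2 ^ q ∨
      (2 ^ (4 * n * k) : ℝ)⁻¹ * (#A * #B) ≤
        #((A ×ˢ B).filter fun p => ¬ ContainsSolution p.1 p.2 L) := by
  have hA' := card_le_univ A
  have hB' := card_le_univ B
  rcases le_or_gt (Fintype.card (Fin m → Fin n → Bool)) (2 ^ q * #A) with hA | hA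
  · rcases le_or_gt (Fintype.card (Fin m → Fin n → Bool)) (2 ^ q * #B) with hB | hB
    · right
      rw [inv_mul_le_iff₀ (by positivity)]
      exact_mod_cast card_mul_card_le_card_filter_not_containsSolution hmn hm hA hB L
    · left
      rw [le_div_iff₀ (by positivity)]
      exact_mod_cast (show #A * #B * 2 ^ q ≤ Fintype.card (Fin m → Fin n → Bool) ^ 2 by
        nlinarith)
  · left
    rw [le_div_iff₀ (by positivity)]
    exact_mod_cast (show #A * #B * 2 ^ q ≤ Fintype.card (Fin m → Fin n → Bool) ^ 2 by
      nlinarith)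

end XorMissingString

lemma two_mul_le_two_pow_of_lt_rpow {m n : ℕ} (h : (m : ℝ) < 2 ^ ((n : ℝ) / 2))
    (hm : 2 ≤ m) :
    2 * m ≤ 2 ^ n := by
  have hsq : (m : ℝ) ^ 2 < 2 ^ n :=
    calc (m : ℝ) ^ 2 < (2 ^ ((n : ℝ) / 2)) ^ 2 := by gcongr
      _ = 2 ^ n := by
        rw [← Real.rpow_natCast (2 ^ _) 2, ← Real.rpow_mul (by norm_num)]
        norm_num
  have hsq' : m ^ 2 < 2 ^ n := by exact_mod_cast hsq
  nlinarith

/-- Any PostBPP list-solver with list size `k` (a family of `2^{k'}` deterministic protocols of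
complexity `c` outputting lists of `k` strings or `⊥`) that list-solves
`XOR-Missing-String(n,m)` with error at most `2^{-5nk}` has communication complexity
`k' + c ≥ m/4`. -/
theorem stmt7 (n m k : ℕ) (hn : 1 ≤ n) (hk : 1 ≤ k) (hm : 20 * n * k ≤ m)
    (hm2 : (m : ℝ) < (2 : ℝ) ^ ((n : ℝ) / 2))
    (k' c : ℕ)
    (Prot : Fin (2 ^ k') → (Fin m → Fin n → Bool) → (Fin m → Fin n → Bool) →
      Option (Fin k → Fin n → Bool))
    (hdet : ∀ r, IsDetProtocol c (Prot r))
    (hsolve : ∀ X Y : Fin m → Fin n → Bool,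
      (∃ r, Prot r X Y ≠ none) ∧
      (1 - ((2 : ℝ) ^ (5 * n * k))⁻¹) *
          ((Finset.univ.filter (fun r => Prot r X Y ≠ none)).card : ℝ) ≤
        ((Finset.univ.filter (fun r => ∃ L : Fin k → Fin n → Bool, Prot r X Y = some L ∧
            ∃ l : Fin k, ∀ i j : Fin m, L l ≠ fun u => Bool.xor (X i u) (Y j u))).card : ℝ)) :
    (m : ℝ) / 4 ≤ ((k' : ℝ) + (c : ℝ)) := by
  have hnk : 1 ≤ n * k := Nat.mul_le_mul hn hk
  rw [mul_assoc] at hm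
  have hmn : 2 * m ≤ 2 ^ n := two_mul_le_two_pow_of_lt_rpow hm2 (by omega)
  have hq : m / 3 + 2 * n * k + 2 ≤ m := by rw [mul_assoc]; omega
  have hεδ : ((2 : ℝ) ^ (5 * n * k))⁻¹ ≤ ((2 : ℝ) ^ (4 * n * k))⁻¹ / 2 := by
    rw [div_eq_mul_inv, ← mul_inv, ← pow_succ]
    gcongr
    · norm_num
    · rw [mul_assoc, mul_assoc]; omega
  have key := sq_card_le_of_postBPP_of_corrupted _ Prot hdet
    (card_mul_card_le_or_le_card_filter_not_containsSolution hmn hq) (by positivity)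
    (by positivity) hεδ hsolve
  rw [mul_div_assoc', le_div_iff₀ (by positivity), mul_comm,
    mul_le_mul_iff_of_pos_right (by positivity)] at key
  have hexp : m / 3 ≤ k' + c + 1 := (pow_le_pow_iff_right₀ one_lt_two).1 key
  rw [div_le_iff₀ four_pos]
  exact_mod_cast (by omega : m ≤ (k' + c) * 4)
end

section
/- Let h : ℝ → ℝ be strictly increasing on [1,∞) with h(x) ≥ x for all x ≥ 1, and suppose h(h(n)/n) ≥ 2^n for every integer n ≥ 1. Then for all integers i' and i with 2 ≤ i' ≤ i and h(i−1) < 2^{i'}, we have h(i') > i'·(i−1). -/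
/-- For a super-half-exponential function `h` (strictly increasing on `[1,∞)`, `h(x) ≥ x`,
and `h(h(n)/n) ≥ 2^n` for all integers `n ≥ 1`): whenever `2 ≤ i' ≤ i` and `h(i-1) < 2^{i'}`,
we have `h(i') > i'·(i-1)`. -/
theorem stmt13 (h : ℝ → ℝ)
    (hmono : StrictMonoOn h (Set.Ici (1 : ℝ)))
    (hge : ∀ x : ℝ, 1 ≤ x → x ≤ h x)
    (hhalf : ∀ n : ℕ, 1 ≤ n → (2 : ℝ) ^ n ≤ h (h n / n)) :
    ∀ i' i : ℕ, 2 ≤ i' → i' ≤ i → h ((i : ℝ) - 1) < (2 : ℝ) ^ i' →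
      (i' : ℝ) * ((i : ℝ) - 1) < h (i' : ℝ) := by
  intro i' i h2 hle hlt
  have hi' : (1 : ℝ) ≤ (i' : ℝ) := by exact_mod_cast Nat.one_le_of_lt h2
  have hi'pos : (0 : ℝ) < (i' : ℝ) := lt_of_lt_of_le one_pos hi'
  have hq1 : (1 : ℝ) ≤ h i' / i' := by
    rw [le_div_iff₀ hi'pos, one_mul]
    exact hge _ hi'
  have him1 : (1 : ℝ) ≤ (i : ℝ) - 1 := by
    have : (2 : ℝ) ≤ (i : ℝ) := by exact_mod_cast le_trans h2 hle
    linarith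
  have key : ((i : ℝ) - 1) < h i' / i' := by
    by_contra hc
    push_neg at hc
    have := hmono.monotoneOn (Set.mem_Ici.2 hq1) (Set.mem_Ici.2 him1) hc
    have h3 := hhalf i' (le_trans one_le_two h2)
    linarith
  calc (i' : ℝ) * ((i : ℝ) - 1) < i' * (h i' / i') := by
        exact (mul_lt_mul_iff_right₀ hi'pos).2 key
    _ = h i' := by field_simp
end

section
/- For all real numbers c₁ ≥ 1, c₄ ≥ 1, and c₂ > 0, there exists an integer i₀ (depending only on c₁, c₂, c₄) such that the following holds. Let h : ℝ → ℝ be strictly increasing on [1,∞) with h(x) ≥ x for all x ≥ 1 and h(h(n)/n) ≥ 2^n for every integer n ≥ 1. Set n_j = 2^j and m_j = 2^{h(j)/10}. Then for all integers i' and i with i₀ ≤ i' ≤ i and h(i−1) < 2^{i'} ≤ h(i), we have c₂ · m_{i'} > n_{i'}^{c₁} · n_i^{c₄}; equivalently, 2^{−c₂·m_{i'}/n_{i'}^{c₁} + n_i^{c₄}} < 1. -/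
/-- For any constants `c₁, c₄ ≥ 1` and `c₂ > 0` there is an `i₀` such that for every
super-half-exponential `h` and all `i₀ ≤ i' ≤ i` with `h(i-1) < 2^{i'} ≤ h(i)`, we have
`c₂·m_{i'} > n_{i'}^{c₁}·n_i^{c₄}` where `n_j = 2^j` and `m_j = 2^{h(j)/10}`. -/
theorem stmt14 (c₁ c₄ : ℝ) (hc₁ : 1 ≤ c₁) (hc₄ : 1 ≤ c₄) (c₂ : ℝ) (hc₂ : 0 < c₂) :
    ∃ i₀ : ℕ, ∀ h : ℝ → ℝ,
      StrictMonoOn h (Set.Ici (1 : ℝ)) →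
      (∀ x : ℝ, 1 ≤ x → x ≤ h x) →
      (∀ n : ℕ, 1 ≤ n → (2 : ℝ) ^ n ≤ h (h n / n)) →
      ∀ i' i : ℕ, i₀ ≤ i' → i' ≤ i →
        h ((i : ℝ) - 1) < (2 : ℝ) ^ i' → (2 : ℝ) ^ i' ≤ h (i : ℝ) →
        ((2 : ℝ) ^ i') ^ c₁ * ((2 : ℝ) ^ i) ^ c₄ < c₂ * (2 : ℝ) ^ (h (i' : ℝ) / 10) := by
  set B : ℝ := Real.logb 2 c₂ with hB
  refine ⟨⌈20 * (c₁ + c₄) + 2 * |B| + 40⌉₊, ?_⟩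
  intro h hmono hge hshe i' i hi0 hii' hlt hle
  have hi'R : 20 * (c₁ + c₄) + 2 * |B| + 40 ≤ (i' : ℝ) := by
    calc 20 * (c₁ + c₄) + 2 * |B| + 40 ≤ (⌈20 * (c₁ + c₄) + 2 * |B| + 40⌉₊ : ℝ) :=
          Nat.le_ceil _
      _ ≤ (i' : ℝ) := by exact_mod_cast hi0
  have habs : (0:ℝ) ≤ |B| := abs_nonneg _
  have hi'80 : (80 : ℝ) ≤ (i' : ℝ) := by nlinarith
  have hiR : (i' : ℝ) ≤ (i : ℝ) := by exact_mod_cast hii'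
  have hi'1 : 1 ≤ i' := by
    by_contra hc
    push_neg at hc
    interval_cases i' <;> norm_num at hi'80
  have hi'pos : (0:ℝ) < (i' : ℝ) := by linarith
  -- h(i') > i'*(i-1)
  have hkey : (i : ℝ) - 1 < h (i' : ℝ) / (i' : ℝ) := by
    have h1 : (2 : ℝ) ^ i' ≤ h (h (i' : ℝ) / (i' : ℝ)) := hshe i' hi'1
    have hmem1 : ((i : ℝ) - 1) ∈ Set.Ici (1 : ℝ) := by
      simp only [Set.mem_Ici]; linarith
    have hmem2 : h (i' : ℝ) / (i' : ℝ) ∈ Set.Ici (1 : ℝ) := by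
      simp only [Set.mem_Ici]
      rw [le_div_iff₀ hi'pos]
      simpa using hge (i' : ℝ) (by linarith)
    exact (hmono.lt_iff_lt hmem1 hmem2).mp (lt_of_lt_of_le hlt h1)
  have hhi' : (i' : ℝ) * ((i : ℝ) - 1) < h (i' : ℝ) := by
    have := (lt_div_iff₀ hi'pos).mp hkey
    linarith [this]
  -- rewrite both sides as rpow
  have h2pos : (0:ℝ) < 2 := two_pos
  rw [← Real.rpow_natCast 2 i', ← Real.rpow_natCast 2 i,
    ← Real.rpow_mul (by norm_num), ← Real.rpow_mul (by norm_num),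
    ← Real.rpow_add h2pos]
  have hc2 : c₂ = (2:ℝ) ^ B := (Real.rpow_logb h2pos (by norm_num) hc₂).symm
  rw [hc2, ← Real.rpow_add h2pos]
  rw [Real.rpow_lt_rpow_left_iff (by norm_num : (1:ℝ) < 2)]
  -- now a purely arithmetic inequality
  have hdiv : (i' : ℝ) * ((i : ℝ) - 1) / 10 < h (i' : ℝ) / 10 := by linarith
  have hgoal : (i' : ℝ) * c₁ + (i : ℝ) * c₄ < B + (i' : ℝ) * ((i : ℝ) - 1) / 10 := by
    have hBB : 0 ≤ B + |B| := by cases abs_cases B <;> linarith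
    have t1 : 0 ≤ ((i' : ℝ) - (20 * (c₁ + c₄) + 2 * |B| + 40)) * ((i : ℝ) - 1) :=
      mul_nonneg (by linarith) (by linarith)
    have t2 : 0 ≤ (c₁ + c₄) * ((i : ℝ) - 2) := mul_nonneg (by linarith) (by linarith)
    have t3 : 0 ≤ c₁ * ((i : ℝ) - (i' : ℝ)) := mul_nonneg (by linarith) (by linarith)
    have t4 : 0 ≤ |B| * ((i : ℝ) - 6) := mul_nonneg habs (by linarith)
    nlinarith [t1, t2, t3, t4, hBB]
  linarith
end
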